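/- arXiv:1904.05474 — 5 statements merged into one kernel-verified Lean document; each statement's English description precedes it below -/
import Mathlib

section
/- Suppose an algorithm for the online re-embedding problem always assigns all vertices of the same currently-revealed connected component to the same server, and let 𝒞 be its total moving cost (α times the number of vertex moves it performs). Then its total communication cost is at most 𝒞, and hence its total cost (moving plus communication) is at most 2𝒞. -/
open Finset

/-- Two vertices lie in the same connected component revealed by the edge list `E`:
the reflexive-symmetric-transitive closure of the revealed edge relation. -/
def sameComp {n : ℕ} (E : List (Fin n × Fin n)) (u v : Fin n) : Prop :=
  Relation.EqvGen (fun a b => (a, b) ∈ E ∨ (b, a) ∈ E) u v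

/-- An instance of the online re-embedding problem with `n` vertices and `ℓ` servers:
a ground-truth partition into components of size `n/ℓ`, a perfectly balanced initial
assignment, and an online edge sequence each of whose edges joins two vertices of the
same ground-truth component and whose revealed connected components are exactly the
ground-truth components. -/
structure ReInstance (n ℓ : ℕ) where
  truth : Fin n → Fin ℓ
  init : Fin n → Fin ℓ
  sigma : List (Fin n × Fin n)
  truth_size : ∀ j, (Finset.univ.filter fun v => truth v = j).card = n / ℓ
  init_size : ∀ j, (Finset.univ.filter fun v => init v = j).card = n / ℓ
  edges_within : ∀ e ∈ sigma, truth e.1 = truth e.2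
  reveals : ∀ u v, sameComp sigma u v ↔ truth u = truth v

/-- A deterministic online algorithm: given the initial assignment and the prefix of the
edge sequence revealed so far, it produces the current assignment of vertices to servers. -/
abbrev OnlineAlg (n ℓ : ℕ) := (Fin n → Fin ℓ) → List (Fin n × Fin n) → Fin n → Fin ℓ

/-- The assignment maintained by online algorithm `A` after `t` requests of `σ` have been
processed (the assignment is `a0` before any request). -/
def state {n ℓ : ℕ} (A : OnlineAlg n ℓ) (a0 : Fin n → Fin ℓ)
    (σ : List (Fin n × Fin n)) : ℕ → Fin n → Fin ℓ
  | 0 => a0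
  | t + 1 => A a0 (σ.take (t + 1))

/-- The number of vertices reassigned when changing assignment `f` into assignment `g`. -/
def movesBetween {n ℓ : ℕ} (f g : Fin n → Fin ℓ) : ℕ :=
  (Finset.univ.filter fun v => f v ≠ g v).card

/-- Total number of vertex moves performed by online algorithm `A` on the instance. -/
def algMoves {n ℓ : ℕ} (A : OnlineAlg n ℓ) (a0 : Fin n → Fin ℓ)
    (σ : List (Fin n × Fin n)) : ℕ :=
  ∑ t ∈ Finset.range σ.length,
    movesBetween (state A a0 σ t) (state A a0 σ (t + 1))

/-- Total communication cost of online algorithm `A`: one unit for every request whose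
endpoints are on different servers at the time of the request. -/
def algComm {n ℓ : ℕ} (A : OnlineAlg n ℓ) (a0 : Fin n → Fin ℓ)
    (σ : List (Fin n × Fin n)) : ℕ :=
  ∑ t : Fin σ.length,
    if state A a0 σ t.val (σ.get t).1 ≠ state A a0 σ t.val (σ.get t).2 then 1 else 0

/-- Total cost of online algorithm `A`: `α` per vertex move plus the communication cost. -/
def algCost {n ℓ : ℕ} (α : ℝ) (A : OnlineAlg n ℓ) (a0 : Fin n → Fin ℓ)
    (σ : List (Fin n × Fin n)) : ℝ :=
  α * algMoves A a0 σ + algComm A a0 σ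

/-- An assignment is valid for augmentation `ε`: each server load is at most `(1+ε)·n/ℓ`. -/
def validCap {n ℓ : ℕ} (ε : ℝ) (f : Fin n → Fin ℓ) : Prop :=
  ∀ j, ((Finset.univ.filter fun v => f v = j).card : ℝ) ≤ (1 + ε) * n / ℓ

/-- An assignment is a perfect partitioning: its classes are exactly the
ground-truth components, i.e. each ground-truth component is alone on one server. -/
def isPerfect {n ℓ : ℕ} (truth f : Fin n → Fin ℓ) : Prop :=
  ∀ u v, f u = f v ↔ truth u = truth v

/-- `f` assigns all vertices of each connected component revealed by `E` to one server. -/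
def collocates {n ℓ : ℕ} (E : List (Fin n × Fin n)) (f : Fin n → Fin ℓ) : Prop :=
  ∀ u v, sameComp E u v → f u = f v

/-- Number of vertex moves of an offline schedule `g` (which may also move vertices
before the first request). -/
def schedMoves {n ℓ : ℕ} (a0 : Fin n → Fin ℓ) (σ : List (Fin n × Fin n))
    (g : ℕ → Fin n → Fin ℓ) : ℕ :=
  movesBetween a0 (g 0) +
    ∑ t ∈ Finset.range σ.length, movesBetween (g t) (g (t + 1))

/-- Communication cost of an offline schedule `g`. -/
def schedComm {n ℓ : ℕ} (σ : List (Fin n × Fin n)) (g : ℕ → Fin n → Fin ℓ) : ℕ :=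
  ∑ t : Fin σ.length, if g t.val (σ.get t).1 ≠ g t.val (σ.get t).2 then 1 else 0

/-- The optimal offline cost: the infimum cost over all offline schedules which respect
the capacity `(1+ε)·n/ℓ` at all times and end with a perfect partitioning. -/
noncomputable def OPTcost {n ℓ : ℕ} (α ε : ℝ) (I : ReInstance n ℓ) : ℝ :=
  sInf { c : ℝ | ∃ g : ℕ → Fin n → Fin ℓ,
    (∀ t, validCap ε (g t)) ∧ isPerfect I.truth (g I.sigma.length) ∧
    c = α * schedMoves I.init I.sigma g + schedComm I.sigma g }

/-- The minimum number of vertex moves of any offline schedule which respects the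
capacity `(1+ε)·n/ℓ` at all times and ends with a perfect partitioning. -/
noncomputable def OPTmoves {n ℓ : ℕ} (ε : ℝ) (I : ReInstance n ℓ) : ℕ :=
  sInf { m : ℕ | ∃ g : ℕ → Fin n → Fin ℓ,
    (∀ t, validCap ε (g t)) ∧ isPerfect I.truth (g I.sigma.length) ∧
    m = schedMoves I.init I.sigma g }

/-!
A request whose endpoints sit on different servers merges them into one revealed component,
which the algorithm must have collocated by the next request: some vertex moves in that step.
So every paid request is charged to a distinct step with at least one move.
-/

theorem sameComp_of_mem {n : ℕ} {E : List (Fin n × Fin n)} {u v : Fin n} (h : (u, v) ∈ E) :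
    sameComp E u v :=
  Relation.EqvGen.rel _ _ (Or.inl h)

theorem movesBetween_pos_of_separated {n ℓ : ℕ} {f g : Fin n → Fin ℓ} {u v : Fin n}
    (hf : f u ≠ f v) (hg : g u = g v) : 0 < movesBetween f g := by
  obtain ⟨w, hw⟩ : ∃ w, f w ≠ g w := by
    by_contra! h
    exact hf ((h u).trans (hg.trans (h v).symm))
  exact Finset.card_pos.mpr ⟨w, by simp [hw]⟩

theorem algComm_le_algMoves {n ℓ : ℕ} (A : OnlineAlg n ℓ) (a0 : Fin n → Fin ℓ)
    (σ : List (Fin n × Fin n)) (hcol : ∀ t, collocates (σ.take t) (state A a0 σ t)) :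
    algComm A a0 σ ≤ algMoves A a0 σ := by
  rw [algComm, algMoves, ← Fin.sum_univ_eq_sum_range]
  refine Finset.sum_le_sum fun t _ => ?_
  split_ifs with hsep
  · have hmem : σ.get t ∈ σ.take (t.val + 1) :=
      List.mem_take_iff_getElem.mpr ⟨t, by simp, rfl⟩
    exact movesBetween_pos_of_separated hsep (hcol _ _ _ (sameComp_of_mem hmem))
  · exact Nat.zero_le _

/-- If an online algorithm always assigns all vertices of the same
currently-revealed connected component to the same server, then its communication cost
is at most its moving cost `𝒞 = α · (number of moves)`, and its total cost is at most `2𝒞`. -/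
theorem stmt0 {n ℓ : ℕ} (α : ℝ) (hα : 1 < α) (I : ReInstance n ℓ) (A : OnlineAlg n ℓ)
    (hcol : ∀ t, collocates (I.sigma.take t) (state A I.init I.sigma t)) :
    (algComm A I.init I.sigma : ℝ) ≤ α * algMoves A I.init I.sigma ∧
    algCost α A I.init I.sigma ≤ 2 * (α * algMoves A I.init I.sigma) := by
  have hcomm : (algComm A I.init I.sigma : ℝ) ≤ α * algMoves A I.init I.sigma :=
    calc (algComm A I.init I.sigma : ℝ) ≤ algMoves A I.init I.sigma := by
          exact_mod_cast algComm_le_algMoves A I.init I.sigma hcol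
      _ ≤ α * algMoves A I.init I.sigma := le_mul_of_one_le_left (Nat.cast_nonneg _) hα.le
  exact ⟨hcomm, by rw [algCost]; linarith⟩
end

section
/- There is a universal constant C such that the following holds for all n, all α > 1 and all ε ∈ (0,1) with ℓ = 2 dividing n. There exists a deterministic online algorithm for the online re-embedding model with two servers, each of capacity (1+ε)·n/2, which always keeps every currently-revealed connected component on a single server, never exceeds the server capacities, ends with each ground-truth component alone on one server, and performs at most C·(n·log₂ n)/ε vertex moves in total on every instance. -/
open Finset

/-!
Small–Large–Rebalance on two servers. After each request, every revealed component is moved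
as a whole to the server that already holds the majority of its vertices; if this overloads a
server, the algorithm instead jumps to some balanced assignment that keeps all revealed
components together (one exists: the ground truth).

A vertex moved by a merge lies on the minority side of its new component, so the size of its
component at least doubles; hence the merge moves are bounded by the increase of
`Φ = ∑ᵥ log₂ |comp v| ≤ n log₂ n`. A rebalance costs at most `n` moves, but is only triggered
when the imbalance `|load₀ - n/2|` exceeds `εn/2`; the imbalance is `0` after a rebalance and
grows by at most one per merge move. So the potential `(1 + 2/ε) Φ - (2/ε) · imbalance` pays for
every step, and the total is at most `(1 + 2/ε) n log₂ n ≤ 3 n log₂ n / ε`.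
-/

namespace SmallLargeRebalance

open Finset

variable {n : ℕ}

section Components

lemma eq_of_sameComp_nil {u v : Fin n} (h : sameComp [] u v) : u = v := by
  induction h with
  | rel a b hab => simp at hab
  | refl a => rfl
  | symm a b _ ih => exact ih.symm
  | trans a b c _ _ ih₁ ih₂ => exact ih₁.trans ih₂

lemma sameComp_mono {E E' : List (Fin n × Fin n)} (h : E ⊆ E') {u v : Fin n}
    (huv : sameComp E u v) : sameComp E' u v :=
  Relation.EqvGen.mono (fun _ _ hab => hab.imp (@h _) (@h _)) u v huv

lemma collocates_nil {ℓ : ℕ} (f : Fin n → Fin ℓ) : collocates [] f :=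
  fun _ _ h => congrArg f (eq_of_sameComp_nil h)

lemma collocates_mono {ℓ : ℕ} {E E' : List (Fin n × Fin n)} {f : Fin n → Fin ℓ} (h : E ⊆ E')
    (hf : collocates E' f) : collocates E f :=
  fun u v huv => hf u v (sameComp_mono h huv)

open scoped Classical in
noncomputable def revealedComp (E : List (Fin n × Fin n)) (v : Fin n) : Finset (Fin n) :=
  univ.filter (sameComp E v)

variable {E E' : List (Fin n × Fin n)}

@[simp]
lemma mem_revealedComp {v w : Fin n} : w ∈ revealedComp E v ↔ sameComp E v w := by
  simp [revealedComp]

lemma revealedComp_eq_of_sameComp {u v : Fin n} (h : sameComp E u v) :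
    revealedComp E u = revealedComp E v := by
  ext w
  simp only [mem_revealedComp]
  exact ⟨(Relation.EqvGen.symm _ _ h).trans _ _ _, h.trans _ _ _⟩

lemma revealedComp_mono (h : E ⊆ E') (v : Fin n) : revealedComp E v ⊆ revealedComp E' v :=
  fun _ hw => mem_revealedComp.mpr (sameComp_mono h (mem_revealedComp.mp hw))

lemma revealedComp_nil (v : Fin n) : revealedComp [] v = {v} := by
  ext w
  simp only [mem_revealedComp, mem_singleton]
  exact ⟨fun h => (eq_of_sameComp_nil h).symm, fun h => h ▸ Relation.EqvGen.refl v⟩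

lemma card_revealedComp_pos (E : List (Fin n × Fin n)) (v : Fin n) : 0 < #(revealedComp E v) :=
  card_pos.mpr ⟨v, mem_revealedComp.mpr (Relation.EqvGen.refl v)⟩

noncomputable def logPotential (E : List (Fin n × Fin n)) : ℝ :=
  ∑ v, Real.logb 2 #(revealedComp E v)

lemma logPotential_nil : logPotential ([] : List (Fin n × Fin n)) = 0 := by
  simp [logPotential, revealedComp_nil]

lemma logPotential_le (E : List (Fin n × Fin n)) : logPotential E ≤ n * Real.logb 2 n := by
  calc logPotential E ≤ ∑ _v : Fin n, Real.logb 2 n := by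
        refine sum_le_sum fun v _ => Real.logb_le_logb_of_le one_lt_two ?_ ?_
        · exact_mod_cast card_revealedComp_pos E v
        · exact_mod_cast (card_le_univ _).trans_eq (Fintype.card_fin n)
    _ = n * Real.logb 2 n := by simp

end Components

section Majority

variable {α : Type*}

lemma card_filter_eq_add_card_filter_eq (s : Finset α) (f : α → Fin 2) {j k : Fin 2}
    (hjk : j ≠ k) : #(s.filter (f · = j)) + #(s.filter (f · = k)) = #s := by
  rw [← card_filter_add_card_filter_not (s := s) (p := (f · = j))]
  congr 2
  ext x
  simp only [mem_filter]
  exact and_congr_right fun _ => by omega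

def majority (s : Finset α) (f : α → Fin 2) : Fin 2 :=
  if #(s.filter (f · = 1)) < #(s.filter (f · = 0)) then 0 else 1

lemma card_filter_le_card_filter_majority (s : Finset α) (f : α → Fin 2) (j : Fin 2) :
    #(s.filter (f · = j)) ≤ #(s.filter (f · = majority s f)) := by
  unfold majority
  split_ifs <;> rcases Fin.exists_fin_two.mp ⟨j, rfl⟩ with rfl | rfl <;> omega

lemma two_mul_card_filter_le_of_ne_majority (s : Finset α) (f : α → Fin 2) {j : Fin 2}
    (hj : j ≠ majority s f) : 2 * #(s.filter (f · = j)) ≤ #s := by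
  have := card_filter_le_card_filter_majority s f j
  have := card_filter_eq_add_card_filter_eq s f hj
  omega

end Majority

section Loads

variable {ℓ : ℕ}

def load (f : Fin n → Fin ℓ) (j : Fin ℓ) : ℕ := #(univ.filter fun v => f v = j)

lemma movesBetween_comm (f g : Fin n → Fin ℓ) : movesBetween f g = movesBetween g f := by
  simp only [movesBetween, ne_comm]

lemma load_le_load_add_movesBetween (f g : Fin n → Fin ℓ) (j : Fin ℓ) :
    load g j ≤ load f j + movesBetween f g := by
  refine (card_le_card fun v hv => ?_).trans (card_union_le _ _)
  simp only [mem_filter, mem_union, mem_univ, true_and] at hv ⊢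
  by_cases h : f v = g v
  · exact .inl (h.trans hv)
  · exact .inr h

lemma abs_load_sub_load_le (f g : Fin n → Fin ℓ) (j : Fin ℓ) :
    |(load g j : ℝ) - load f j| ≤ movesBetween f g := by
  have h₁ : (load g j : ℝ) ≤ load f j + movesBetween f g := by
    exact_mod_cast load_le_load_add_movesBetween f g j
  have h₂ : (load f j : ℝ) ≤ load g j + movesBetween f g := by
    rw [movesBetween_comm]
    exact_mod_cast load_le_load_add_movesBetween g f j
  rw [abs_sub_le_iff]
  constructor <;> linarith

end Loads

section TwoServers

variable {E E' : List (Fin n × Fin n)}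

lemma load_zero_add_load_one (f : Fin n → Fin 2) : load f 0 + load f 1 = n := by
  simpa [load] using card_filter_eq_add_card_filter_eq univ f (by decide : (0 : Fin 2) ≠ 1)

noncomputable def imbalance (f : Fin n → Fin 2) : ℝ := |(load f 0 : ℝ) - n / 2|

lemma imbalance_le_add_movesBetween (f g : Fin n → Fin 2) :
    imbalance g ≤ imbalance f + movesBetween f g := by
  have := abs_load_sub_load_le f g 0
  have := abs_sub_le (load g 0 : ℝ) (load f 0) (n / 2)
  unfold imbalance
  linarith

lemma imbalance_eq_zero_of_two_mul_load {f : Fin n → Fin 2} (h : 2 * load f 0 = n) :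
    imbalance f = 0 := by
  have : (2 * load f 0 : ℝ) = n := by exact_mod_cast h
  rw [imbalance, abs_eq_zero, sub_eq_zero]
  linarith

lemma lt_imbalance_of_not_validCap {ε : ℝ} {f : Fin n → Fin 2} (h : ¬ validCap ε f) :
    ε * n / 2 < imbalance f := by
  simp only [validCap, not_forall, not_le] at h
  obtain ⟨j, hj⟩ := h
  change (1 + ε) * n / ((2 : ℕ) : ℝ) < (load f j : ℝ) at hj
  have hsum : (load f 0 : ℝ) + load f 1 = n := by exact_mod_cast load_zero_add_load_one f
  push_cast at hj
  rcases Fin.exists_fin_two.mp ⟨j, rfl⟩ with rfl | rfl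
  · exact lt_of_lt_of_le (by linarith) (le_abs_self _)
  · exact lt_of_lt_of_le (by linarith) (neg_le_abs _)

lemma validCap_of_two_mul_load_le {ε : ℝ} (hε : 0 ≤ ε) {f : Fin n → Fin 2}
    (h : ∀ j, 2 * load f j ≤ n) : validCap ε f := by
  intro j
  have : (2 * load f j : ℝ) ≤ n := by exact_mod_cast h j
  change (load f j : ℝ) ≤ (1 + ε) * n / ((2 : ℕ) : ℝ)
  push_cast
  linarith [mul_nonneg hε (Nat.cast_nonneg (α := ℝ) n)]

noncomputable def mergeStep (E : List (Fin n × Fin n)) (f : Fin n → Fin 2) : Fin n → Fin 2 :=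
  fun v => majority (revealedComp E v) f

lemma collocates_mergeStep (E : List (Fin n × Fin n)) (f : Fin n → Fin 2) :
    collocates E (mergeStep E f) :=
  fun _ _ h => by simp only [mergeStep, revealedComp_eq_of_sameComp h]

lemma two_mul_card_revealedComp_le_of_ne_mergeStep (hE : E ⊆ E') {f : Fin n → Fin 2}
    (hf : collocates E f) {v : Fin n} (hv : f v ≠ mergeStep E' f v) :
    2 * #(revealedComp E v) ≤ #(revealedComp E' v) := by
  have hsub : revealedComp E v ⊆ (revealedComp E' v).filter (f · = f v) := fun w hw =>
    mem_filter.mpr ⟨revealedComp_mono hE v hw, (hf v w (mem_revealedComp.mp hw)).symm⟩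
  have := two_mul_card_filter_le_of_ne_majority (revealedComp E' v) f hv
  have := card_le_card hsub
  omega

lemma one_le_logb_two_sub_of_two_mul_le {a b : ℝ} (ha : 0 < a) (h : 2 * a ≤ b) :
    1 ≤ Real.logb 2 b - Real.logb 2 a := by
  have := Real.logb_le_logb_of_le one_lt_two (by positivity) h
  rw [Real.logb_mul two_ne_zero ha.ne', Real.logb_self_eq_one one_lt_two] at this
  linarith

lemma movesBetween_mergeStep_le (hE : E ⊆ E') {f : Fin n → Fin 2} (hf : collocates E f) :
    (movesBetween f (mergeStep E' f) : ℝ) ≤ logPotential E' - logPotential E := by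
  rw [movesBetween, card_filter, Nat.cast_sum, logPotential, logPotential, ← sum_sub_distrib]
  refine sum_le_sum fun v _ => ?_
  have ha : (0 : ℝ) < #(revealedComp E v) := by exact_mod_cast card_revealedComp_pos E v
  split_ifs with hv
  · have h2 : (2 * #(revealedComp E v) : ℝ) ≤ #(revealedComp E' v) := by
      exact_mod_cast two_mul_card_revealedComp_le_of_ne_mergeStep hE hf hv
    exact_mod_cast one_le_logb_two_sub_of_two_mul_le ha h2
  · have : (#(revealedComp E v) : ℝ) ≤ #(revealedComp E' v) := by
      exact_mod_cast card_le_card (revealedComp_mono hE v)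
    push_cast
    linarith [Real.logb_le_logb_of_le one_lt_two ha this]

end TwoServers

section Algorithm

variable {E E' : List (Fin n × Fin n)} {ε : ℝ}

def IsBalancedSplit (E : List (Fin n × Fin n)) (g : Fin n → Fin 2) : Prop :=
  collocates E g ∧ ∀ j, 2 * load g j ≤ n

noncomputable def rebalance (E : List (Fin n × Fin n)) : Fin n → Fin 2 :=
  Classical.epsilon (IsBalancedSplit E)

lemma isBalancedSplit_rebalance (h : ∃ g, IsBalancedSplit E g) :
    IsBalancedSplit E (rebalance E) :=
  Classical.epsilon_spec h

lemma imbalance_rebalance (h : ∃ g, IsBalancedSplit E g) : imbalance (rebalance E) = 0 := by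
  obtain ⟨-, hload⟩ := isBalancedSplit_rebalance h
  have := hload 0
  have := hload 1
  have := load_zero_add_load_one (rebalance E)
  exact imbalance_eq_zero_of_two_mul_load (by omega)

open scoped Classical in
noncomputable def slrStep (ε : ℝ) (E : List (Fin n × Fin n)) (f : Fin n → Fin 2) :
    Fin n → Fin 2 :=
  if validCap ε (mergeStep E f) then mergeStep E f else rebalance E

lemma slrStep_spec (hε : 0 ≤ ε) (h : ∃ g, IsBalancedSplit E g) (f : Fin n → Fin 2) :
    collocates E (slrStep ε E f) ∧ validCap ε (slrStep ε E f) := by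
  unfold slrStep
  split_ifs with hv
  · exact ⟨collocates_mergeStep E f, hv⟩
  · obtain ⟨hcol, hload⟩ := isBalancedSplit_rebalance h
    exact ⟨hcol, validCap_of_two_mul_load_le hε hload⟩

lemma movesBetween_slrStep_le (hε : 0 < ε) (h : ∃ g, IsBalancedSplit E' g) (hE : E ⊆ E')
    {f : Fin n → Fin 2} (hf : collocates E f) :
    (movesBetween f (slrStep ε E' f) : ℝ) ≤ (1 + 2 / ε) * (logPotential E' - logPotential E) -
      2 / ε * (imbalance (slrStep ε E' f) - imbalance f) := by
  have hmerge := movesBetween_mergeStep_le hE hf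
  have himb := mul_le_mul_of_nonneg_left (imbalance_le_add_movesBetween f (mergeStep E' f))
    (by positivity : 0 ≤ 2 / ε)
  have hpot := mul_le_mul_of_nonneg_left hmerge (by positivity : 0 ≤ 2 / ε)
  unfold slrStep
  split_ifs with hv
  · linarith
  · rw [imbalance_rebalance h]
    have hmoves : (movesBetween f (rebalance E') : ℝ) ≤ n := by
      exact_mod_cast (card_le_univ _).trans_eq (Fintype.card_fin n)
    have hbig : (n : ℝ) ≤ 2 / ε * imbalance (mergeStep E' f) := by
      rw [div_mul_eq_mul_div, le_div_iff₀ hε]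
      linarith [lt_imbalance_of_not_validCap hv]
    linarith [(Nat.cast_nonneg _ : (0 : ℝ) ≤ movesBetween f (mergeStep E' f))]

/-- `slrRun` takes the revealed prefix newest edge first, so that it recurses structurally. -/
noncomputable def slrRun (ε : ℝ) (a0 : Fin n → Fin 2) : List (Fin n × Fin n) → Fin n → Fin 2
  | [] => a0
  | e :: past => slrStep ε (e :: past).reverse (slrRun ε a0 past)

noncomputable def slrAlg (ε : ℝ) : OnlineAlg n 2 := fun a0 E => slrRun ε a0 E.reverse

variable (ε) (a0 : Fin n → Fin 2)

lemma slrAlg_append_singleton (E : List (Fin n × Fin n)) (e : Fin n × Fin n) :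
    slrAlg ε a0 (E ++ [e]) = slrStep ε (E ++ [e]) (slrAlg ε a0 E) := by
  simp [slrAlg, slrRun]

lemma state_slrAlg (σ : List (Fin n × Fin n)) (t : ℕ) :
    state (slrAlg ε) a0 σ t = slrAlg ε a0 (σ.take t) := by
  cases t <;> rfl

lemma slrAlg_take_add_one (σ : List (Fin n × Fin n)) {t : ℕ} (ht : t < σ.length) :
    slrAlg ε a0 (σ.take (t + 1)) = slrStep ε (σ.take (t + 1)) (slrAlg ε a0 (σ.take t)) := by
  rw [← List.take_concat_get ht, List.concat_eq_append, slrAlg_append_singleton]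

variable {ε a0}

lemma slrAlg_spec (hε : 0 ≤ ε) (ha0 : validCap ε a0) (h : ∃ g, IsBalancedSplit E g) :
    collocates E (slrAlg ε a0 E) ∧ validCap ε (slrAlg ε a0 E) := by
  cases E using List.reverseRecOn with
  | nil => exact ⟨collocates_nil a0, ha0⟩
  | append_singleton E e => rw [slrAlg_append_singleton]; exact slrStep_spec hε h _

end Algorithm

section Instance

variable (I : ReInstance n 2) {ε : ℝ}

lemma exists_isBalancedSplit_take (t : ℕ) : ∃ g, IsBalancedSplit (I.sigma.take t) g :=
  ⟨I.truth, collocates_mono (List.take_subset t _) fun u v h => (I.reveals u v).mp h,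
    fun j => by rw [load, I.truth_size j]; omega⟩

lemma validCap_init (hε : 0 ≤ ε) : validCap ε I.init :=
  validCap_of_two_mul_load_le hε fun j => by rw [load, I.init_size j]; omega

lemma isPerfect_of_collocates (hε : ε < 1) {f : Fin n → Fin 2} (hcol : collocates I.sigma f)
    (hval : validCap ε f) : isPerfect I.truth f := by
  refine fun u v => ⟨fun hf => ?_, fun ht => hcol u v ((I.reveals u v).mpr ht)⟩
  by_contra ht
  -- with two servers, the ground-truth components of `u` and `v` cover all vertices
  have hall : load f (f u) = n := by
    rw [load, filter_true_of_mem fun w _ => ?_, card_univ, Fintype.card_fin]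
    by_cases hw : I.truth w = I.truth u
    · exact hcol w u ((I.reveals w u).mpr hw)
    · exact (hcol w v ((I.reveals w v).mpr (by omega))).trans hf.symm
  have hcap : (load f (f u) : ℝ) ≤ (1 + ε) * n / ((2 : ℕ) : ℝ) := hval (f u)
  rw [hall] at hcap
  push_cast at hcap
  have hn : (1 : ℝ) ≤ n := by exact_mod_cast u.pos
  nlinarith

theorem algMoves_slrAlg_le (hε : 0 < ε) (hε1 : ε ≤ 1) (hn : 2 ∣ n) :
    (algMoves (slrAlg ε) I.init I.sigma : ℝ) ≤ 3 * (n * Real.logb 2 n) / ε := by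
  set σ := I.sigma
  set F : ℕ → Fin n → Fin 2 := fun t => slrAlg ε I.init (σ.take t)
  set ψ : ℕ → ℝ := fun t => (1 + 2 / ε) * logPotential (σ.take t) - 2 / ε * imbalance (F t)
  have hstep : ∀ t < σ.length, (movesBetween (F t) (F (t + 1)) : ℝ) ≤ ψ (t + 1) - ψ t := by
    intro t ht
    have := movesBetween_slrStep_le hε (exists_isBalancedSplit_take I (t + 1))
      (List.take_subset_take_left σ t.le_succ)
      (slrAlg_spec hε.le (validCap_init I hε.le) (exists_isBalancedSplit_take I t)).1
    simp only [F, ψ, slrAlg_take_add_one _ _ _ ht]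
    linarith
  have htotal : (algMoves (slrAlg ε) I.init σ : ℝ) ≤ ψ σ.length - ψ 0 := by
    rw [algMoves, Nat.cast_sum, ← sum_range_sub]
    exact sum_le_sum fun t ht => by simpa only [state_slrAlg] using hstep t (mem_range.mp ht)
  have hψ0 : ψ 0 = 0 := by
    have : imbalance I.init = 0 :=
      imbalance_eq_zero_of_two_mul_load (by rw [load, I.init_size 0, Nat.mul_div_cancel' hn])
    simp [ψ, F, logPotential_nil, slrAlg, slrRun, this]
  have hψr : ψ σ.length ≤ (1 + 2 / ε) * (n * Real.logb 2 n) := by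
    have := mul_le_mul_of_nonneg_left (logPotential_le (σ.take σ.length))
      (by positivity : 0 ≤ 1 + 2 / ε)
    have himb : 0 ≤ imbalance (F σ.length) := abs_nonneg _
    have := mul_nonneg (by positivity : 0 ≤ 2 / ε) himb
    simp only [ψ]
    linarith
  have hX : 0 ≤ (n : ℝ) * Real.logb 2 n :=
    mul_nonneg n.cast_nonneg (div_nonneg (Real.log_natCast_nonneg n) (Real.log_nonneg one_le_two))
  calc (algMoves (slrAlg ε) I.init σ : ℝ) ≤ (1 + 2 / ε) * (n * Real.logb 2 n) := by linarith
    _ = (ε + 2) * (n * Real.logb 2 n) / ε := by field_simp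
    _ ≤ 3 * (n * Real.logb 2 n) / ε := by gcongr; linarith

end Instance

end SmallLargeRebalance

/-- **Small–Large–Rebalance, two servers.** There is a universal constant
`C` such that for all `n`, `α > 1`, `ε ∈ (0,1)` with `2 ∣ n` there is a deterministic
online algorithm for two servers of capacity `(1+ε)·n/2` which always keeps every
currently-revealed connected component on one server, never exceeds the capacities,
ends with each ground-truth component alone on one server, and performs at most
`C·(n·log₂ n)/ε` vertex moves on every instance. -/
theorem stmt3 :
    ∃ C : ℝ, 0 < C ∧
      ∀ (n : ℕ) (α ε : ℝ), 1 < α → 0 < ε → ε < 1 → 2 ∣ n →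
        ∃ A : OnlineAlg n 2, ∀ I : ReInstance n 2,
          (∀ t, collocates (I.sigma.take t) (state A I.init I.sigma t)) ∧
          (∀ t, validCap ε (state A I.init I.sigma t)) ∧
          isPerfect I.truth (state A I.init I.sigma I.sigma.length) ∧
          (algMoves A I.init I.sigma : ℝ) ≤ C * (n * Real.logb 2 n) / ε := by
  open SmallLargeRebalance in
  refine ⟨3, by norm_num, fun n _ ε _ hε hε1 hn => ⟨slrAlg ε, fun I => ?_⟩⟩
  have hinv : ∀ t, collocates (I.sigma.take t) (state (slrAlg ε) I.init I.sigma t) ∧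
      validCap ε (state (slrAlg ε) I.init I.sigma t) := fun t => by
    rw [state_slrAlg]
    exact slrAlg_spec hε.le (validCap_init I hε.le) (exists_isBalancedSplit_take I t)
  have hfinal := hinv I.sigma.length
  rw [List.take_length] at hfinal
  exact ⟨fun t => (hinv t).1, fun t => (hinv t).2,
    isPerfect_of_collocates I hε1 hfinal.1 hfinal.2, algMoves_slrAlg_le I hε hε1.le hn⟩
end

section
/- There is a universal constant C such that the following holds for all n, all α > 1 and all ε > 0 with ℓ = 2 dividing n. There exists a deterministic online algorithm for the online re-embedding model with two servers, each of capacity (1+ε)·n/2, which always keeps every currently-revealed connected component on a single server, never exceeds the server capacities, ends with each ground-truth component alone on one server, and, on every instance, performs at most C·(n·log₂ n + (M·log₂ n)/ε) vertex moves, where M is the number of vertex moves performed by the optimal offline algorithm on that instance. -/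
open Finset

/-!
Small–Large–Rebalance: when a request joins two components, the smaller one moves to the server
of the larger one, unless this pushes a load above `n/2 + K`; then the algorithm jumps instead to
a perfectly balanced assignment collocating the revealed components that is closest to the
initial one. A vertex moved from small to large lands in a component at least twice as big, so
these moves are paid for by the potential `∑ᵥ ⌊log₂ |comp v|⌋ ≤ n log₂ n`. If `D` is the
distance from the initial assignment to the nearer of the two perfect partitionings (a lower
bound for OPT), a rebalancing costs at most `4D` plus the moves since the previous one, and it
is triggered only after more than `K` of them. With `K ≈ εn / (4(1+ε))` there are
`O((1 + 1/ε) log n)` rebalancings, which cost `O(n log n + D log n / ε)` moves as `D ≤ n`.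
-/

open scoped Classical

section Moves

variable {n ℓ : ℕ}

def load (f : Fin n → Fin ℓ) (j : Fin ℓ) : ℕ :=
  #{v | f v = j}

theorem movesBetween_self (f : Fin n → Fin ℓ) : movesBetween f f = 0 := by
  simp [movesBetween]

theorem movesBetween_comm (f g : Fin n → Fin ℓ) : movesBetween f g = movesBetween g f := by
  simp only [movesBetween, ne_comm]

theorem movesBetween_triangle (f g h : Fin n → Fin ℓ) :
    movesBetween f h ≤ movesBetween f g + movesBetween g h := by
  refine (card_le_card fun v hv => ?_).trans (card_union_le _ _)
  simp only [mem_filter, mem_union, mem_univ, true_and] at hv ⊢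
  by_contra! hc
  exact hv (hc.1.trans hc.2)

theorem movesBetween_le (f g : Fin n → Fin ℓ) : movesBetween f g ≤ n :=
  (card_le_univ _).trans (Fintype.card_fin n).le

theorem load_le_load_add_movesBetween (f g : Fin n → Fin ℓ) (j : Fin ℓ) :
    load g j ≤ load f j + movesBetween f g := by
  refine (card_le_card fun v hv => ?_).trans (card_union_le _ _)
  simp only [mem_filter, mem_union, mem_univ, true_and] at hv ⊢
  by_cases h : f v = g v
  · exact Or.inl (h.trans hv)
  · exact Or.inr h

theorem load_rev_comp (f : Fin n → Fin ℓ) (j : Fin ℓ) :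
    load (Fin.rev ∘ f) j = load f j.rev := by
  simp only [load, Function.comp_apply, Fin.rev_eq_iff]

def moveTo (f : Fin n → Fin ℓ) (c : Finset (Fin n)) (j : Fin ℓ) : Fin n → Fin ℓ :=
  fun v => if v ∈ c then j else f v

theorem movesBetween_moveTo_le (f : Fin n → Fin ℓ) (c : Finset (Fin n)) (j : Fin ℓ) :
    movesBetween f (moveTo f c j) ≤ #c :=
  card_le_card fun v hv => by
    by_contra hc
    simp [moveTo, hc] at hv

theorem movesBetween_le_schedMoves (a0 : Fin n → Fin ℓ) (σ : List (Fin n × Fin n))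
    (g : ℕ → Fin n → Fin ℓ) : movesBetween a0 (g σ.length) ≤ schedMoves a0 σ g := by
  suffices ∀ N, movesBetween a0 (g N) ≤
      movesBetween a0 (g 0) + ∑ t ∈ range N, movesBetween (g t) (g (t + 1)) from this _
  intro N
  induction N with
  | zero => simp
  | succ N ih =>
    rw [sum_range_succ]
    have := movesBetween_triangle a0 (g N) (g (N + 1))
    omega

end Moves

section Components

variable {n : ℕ} {E : List (Fin n × Fin n)}

theorem sameComp_equivalence (E : List (Fin n × Fin n)) : Equivalence (sameComp E) :=
  Relation.EqvGen.is_equivalence _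

theorem sameComp.refl (E : List (Fin n × Fin n)) (u : Fin n) : sameComp E u u :=
  (sameComp_equivalence E).refl u

theorem sameComp.symm {u v : Fin n} (h : sameComp E u v) : sameComp E v u :=
  (sameComp_equivalence E).symm h

theorem sameComp.trans {u v w : Fin n} (h₁ : sameComp E u v) (h₂ : sameComp E v w) :
    sameComp E u w :=
  (sameComp_equivalence E).trans h₁ h₂

theorem sameComp_nil {u v : Fin n} : sameComp [] u v ↔ u = v := by
  refine ⟨fun h => ?_, fun h => h ▸ sameComp.refl _ u⟩
  induction h with
  | rel a b hab => simp at hab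
  | refl => rfl
  | symm _ _ _ ih => exact ih.symm
  | trans _ _ _ _ _ ih₁ ih₂ => exact ih₁.trans ih₂

theorem collocates_iff_forall_mem {ℓ : ℕ} {f : Fin n → Fin ℓ} :
    collocates E f ↔ ∀ e ∈ E, f e.1 = f e.2 := by
  refine ⟨fun hf e he => hf _ _ (.rel _ _ (Or.inl he)), fun hf u v h => ?_⟩
  induction h with
  | rel a b hab => exact hab.elim (hf _) (fun h => (hf _ h).symm)
  | refl => rfl
  | symm _ _ _ ih => exact ih.symm
  | trans _ _ _ _ _ ih₁ ih₂ => exact ih₁.trans ih₂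

def MergesComps (E E' : List (Fin n × Fin n)) (p q : Fin n) : Prop :=
  ∀ x y, sameComp E' x y ↔ sameComp E x y ∨ (sameComp E x p ∧ sameComp E q y) ∨
    (sameComp E x q ∧ sameComp E p y)

theorem MergesComps.symm {E' : List (Fin n × Fin n)} {p q : Fin n}
    (h : MergesComps E E' p q) : MergesComps E E' q p :=
  fun x y => (h x y).trans (by rw [or_comm (a := _ ∧ _)])

theorem MergesComps.sameComp {E' : List (Fin n × Fin n)} {p q x y : Fin n}
    (h : MergesComps E E' p q) (hxy : sameComp E x y) : sameComp E' x y :=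
  (h x y).2 (Or.inl hxy)

theorem mergesComps_append (E : List (Fin n × Fin n)) (e : Fin n × Fin n) :
    MergesComps E (E ++ [e]) e.1 e.2 := by
  intro x y
  have hmono : ∀ {u v}, sameComp E u v → sameComp (E ++ [e]) u v := fun h =>
    Relation.EqvGen.mono (fun _ _ => Or.imp (List.mem_append_left _) (List.mem_append_left _))
      _ _ h
  have he : sameComp (E ++ [e]) e.1 e.2 := .rel _ _ (Or.inl (by simp))
  constructor
  · intro h
    induction h with
    | rel a b hab =>
      simp only [List.mem_append, List.mem_singleton] at hab
      rcases hab with (hab | rfl) | (hab | rfl)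
      · exact Or.inl (.rel _ _ (Or.inl hab))
      · exact Or.inr (Or.inl ⟨.refl _ _, .refl _ _⟩)
      · exact Or.inl (.rel _ _ (Or.inr hab))
      · exact Or.inr (Or.inr ⟨.refl _ _, .refl _ _⟩)
    | refl a => exact Or.inl (.refl _ _)
    | symm a b _ ih =>
      rcases ih with h | ⟨h₁, h₂⟩ | ⟨h₁, h₂⟩
      · exact Or.inl h.symm
      · exact Or.inr (Or.inr ⟨h₂.symm, h₁.symm⟩)
      · exact Or.inr (Or.inl ⟨h₂.symm, h₁.symm⟩)
    | trans a b c _ _ ih₁ ih₂ =>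
      rcases ih₁ with h₁ | ⟨p₁, p₂⟩ | ⟨p₁, p₂⟩ <;>
        rcases ih₂ with h₂ | ⟨q₁, q₂⟩ | ⟨q₁, q₂⟩ <;>
        grind [sameComp.trans]
  · rintro (h | ⟨h₁, h₂⟩ | ⟨h₁, h₂⟩)
    · exact hmono h
    · exact (hmono h₁).trans (he.trans (hmono h₂))
    · exact (hmono h₁).trans (he.symm.trans (hmono h₂))

end Components

section OnlineAlg

variable {n ℓ : ℕ}

theorem state_eq_take {A : OnlineAlg n ℓ} {a0 : Fin n → Fin ℓ} (hA : A a0 [] = a0)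
    (σ : List (Fin n × Fin n)) (t : ℕ) : state A a0 σ t = A a0 (σ.take t) := by
  cases t with
  | zero => exact hA.symm
  | succ t => rfl

theorem algMoves_append {A : OnlineAlg n ℓ} {a0 : Fin n → Fin ℓ} (hA : A a0 [] = a0)
    (l : List (Fin n × Fin n)) (e : Fin n × Fin n) :
    algMoves A a0 (l ++ [e]) = algMoves A a0 l + movesBetween (A a0 l) (A a0 (l ++ [e])) := by
  simp only [algMoves, state_eq_take hA, List.length_append, List.length_singleton,
    sum_range_succ]
  congr 1
  · refine sum_congr rfl fun t ht => ?_
    rw [List.take_append_of_le_length (by simp at ht; omega),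
      List.take_append_of_le_length (by simp at ht; omega)]
  · simp [List.take_of_length_le]

end OnlineAlg

section Potential

variable {n : ℕ} {E E' : List (Fin n × Fin n)}

noncomputable def comp (E : List (Fin n × Fin n)) (v : Fin n) : Finset (Fin n) :=
  {u | sameComp E v u}

@[simp]
theorem mem_comp {v u : Fin n} : u ∈ comp E v ↔ sameComp E v u := by
  simp [comp]

theorem comp_eq_of_sameComp {u v : Fin n} (h : sameComp E u v) : comp E u = comp E v := by
  ext x
  simp only [mem_comp]
  exact ⟨h.symm.trans, h.trans⟩

theorem comp_mono (h : ∀ x y, sameComp E x y → sameComp E' x y) (v : Fin n) :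
    comp E v ⊆ comp E' v := fun _ hx => mem_comp.2 (h _ _ (mem_comp.1 hx))

/-- A vertex moved into a component at least as large as its own ends up in a component of at
least twice the size, so every such move raises the potential by at least one. -/
noncomputable def pot (E : List (Fin n × Fin n)) : ℕ :=
  ∑ v, Nat.log 2 #(comp E v)

theorem pot_mono (h : ∀ x y, sameComp E x y → sameComp E' x y) : pot E ≤ pot E' :=
  sum_le_sum fun v _ => Nat.log_mono_right (card_le_card (comp_mono h v))

theorem pot_le (E : List (Fin n × Fin n)) : pot E ≤ n * Nat.log 2 n := by
  calc pot E ≤ ∑ _v : Fin n, Nat.log 2 n :=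
        sum_le_sum fun v _ => Nat.log_mono_right ((card_le_univ _).trans (Fintype.card_fin n).le)
    _ = n * Nat.log 2 n := by simp

theorem comp_eq_union_of_merge {p q x : Fin n}
    (hE' : MergesComps E E' p q) (hpq : ¬ sameComp E p q) (hx : sameComp E p x) :
    comp E' x = comp E p ∪ comp E q := by
  ext y
  simp only [mem_union, mem_comp, hE' x y]
  constructor
  · rintro (h | ⟨-, h⟩ | ⟨h, -⟩)
    · exact Or.inl (hx.trans h)
    · exact Or.inr h
    · exact absurd (hx.trans h) hpq
  · rintro (h | h)
    · exact Or.inl (hx.symm.trans h)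
    · exact Or.inr (Or.inl ⟨hx.symm, h⟩)

theorem pot_add_card_le_of_merge {p q : Fin n}
    (hE' : MergesComps E E' p q) (hpq : ¬ sameComp E p q)
    (hcard : #(comp E p) ≤ #(comp E q)) :
    pot E + #(comp E p) ≤ pot E' := by
  have hdisj : Disjoint (comp E p) (comp E q) :=
    disjoint_left.2 fun x hp hq => hpq ((mem_comp.1 hp).trans (mem_comp.1 hq).symm)
  have hpoint : ∀ v, Nat.log 2 #(comp E v) + (if v ∈ comp E p then 1 else 0) ≤
      Nat.log 2 #(comp E' v) := by
    intro v
    split_ifs with hv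
    · rw [comp_eq_union_of_merge hE' hpq (mem_comp.1 hv), card_union_of_disjoint hdisj,
        ← comp_eq_of_sameComp (mem_comp.1 hv),
        ← Nat.log_mul_base one_lt_two (card_pos.2 ⟨p, mem_comp.2 (.refl E p)⟩).ne']
      exact Nat.log_mono_right (by omega)
    · rw [add_zero]
      exact Nat.log_mono_right (card_le_card (comp_mono (fun _ _ => hE'.sameComp) v))
  calc pot E + #(comp E p)
      = ∑ v, (Nat.log 2 #(comp E v) + if v ∈ comp E p then 1 else 0) := by
        rw [sum_add_distrib, sum_ite_mem, univ_inter, sum_const, smul_eq_mul, mul_one, pot]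
    _ ≤ pot E' := sum_le_sum fun v _ => hpoint v

theorem collocates_moveTo_of_merge {ℓ : ℕ} {p q : Fin n} {f : Fin n → Fin ℓ}
    (hE' : MergesComps E E' p q) (hpq : ¬ sameComp E p q) (hf : collocates E f) :
    collocates E' (moveTo f (comp E p) (f q)) := by
  have hout : ∀ {y}, sameComp E q y → y ∉ comp E p := fun hy hp =>
    hpq ((mem_comp.1 hp).trans hy.symm)
  intro x y h
  rcases (hE' x y).1 h with h | ⟨hx, hy⟩ | ⟨hx, hy⟩
  · by_cases hxp : x ∈ comp E p
    · have hyp : y ∈ comp E p := mem_comp.2 ((mem_comp.1 hxp).trans h)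
      simp [moveTo, hxp, hyp]
    · have hyp : y ∉ comp E p := fun hyp => hxp (mem_comp.2 ((mem_comp.1 hyp).trans h.symm))
      simpa [moveTo, hxp, hyp] using hf x y h
  · simpa [moveTo, mem_comp.2 hx.symm, hout hy] using hf q y hy
  · simpa [moveTo, mem_comp.2 hy, hout hx.symm] using hf x q hx

end Potential

section Algorithm

variable {n ℓ : ℕ}

noncomputable def orient (E : List (Fin n × Fin n)) (e : Fin n × Fin n) : Fin n × Fin n :=
  if #(comp E e.1) ≤ #(comp E e.2) then e else e.swap

theorem card_comp_orient_fst_le (E : List (Fin n × Fin n)) (e : Fin n × Fin n) :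
    #(comp E (orient E e).1) ≤ #(comp E (orient E e).2) := by
  unfold orient
  split_ifs with h
  · exact h
  · exact (not_le.1 h).le

theorem mergesComps_append_orient (E : List (Fin n × Fin n)) (e : Fin n × Fin n) :
    MergesComps E (E ++ [e]) (orient E e).1 (orient E e).2 := by
  unfold orient
  split_ifs
  · exact mergesComps_append E e
  · exact (mergesComps_append E e).symm

theorem sameComp_orient_iff {E : List (Fin n × Fin n)} {e : Fin n × Fin n} :
    sameComp E (orient E e).1 (orient E e).2 ↔ sameComp E e.1 e.2 := by
  unfold orient
  split_ifs
  · rfl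
  · exact ⟨sameComp.symm, sameComp.symm⟩

noncomputable def mergeMove (f : Fin n → Fin ℓ) (E : List (Fin n × Fin n))
    (e : Fin n × Fin n) : Fin n → Fin ℓ :=
  moveTo f (comp E (orient E e).1) (f (orient E e).2)

theorem collocates_mergeMove {f : Fin n → Fin ℓ} {E : List (Fin n × Fin n)}
    {e : Fin n × Fin n} (hf : collocates E f) (he : ¬ sameComp E e.1 e.2) :
    collocates (E ++ [e]) (mergeMove f E e) :=
  collocates_moveTo_of_merge (mergesComps_append_orient E e) (sameComp_orient_iff.not.2 he) hf

theorem pot_add_movesBetween_mergeMove_le (f : Fin n → Fin ℓ) {E : List (Fin n × Fin n)}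
    {e : Fin n × Fin n} (he : ¬ sameComp E e.1 e.2) :
    pot E + movesBetween f (mergeMove f E e) ≤ pot (E ++ [e]) :=
  (Nat.add_le_add_left (movesBetween_moveTo_le _ _ _) _).trans
    (pot_add_card_le_of_merge (mergesComps_append_orient E e) (sameComp_orient_iff.not.2 he)
      (card_comp_orient_fst_le E e))

def balancedCollocations (E : List (Fin n × Fin n)) : Set (Fin n → Fin ℓ) :=
  {f | collocates E f ∧ ∀ j, load f j = n / ℓ}

noncomputable def rebalance (a0 : Fin n → Fin ℓ) (E : List (Fin n × Fin n)) :
    Fin n → Fin ℓ :=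
  if h : (balancedCollocations E).Nonempty then Function.argminOn (movesBetween a0) _ h else a0

theorem rebalance_spec {a0 T : Fin n → Fin ℓ} {E : List (Fin n × Fin n)}
    (hT : T ∈ balancedCollocations E) :
    rebalance a0 E ∈ balancedCollocations E ∧
      movesBetween a0 (rebalance a0 E) ≤ movesBetween a0 T := by
  rw [rebalance, dif_pos ⟨T, hT⟩]
  exact ⟨Function.argminOn_mem _ _ _, Function.argminOn_le _ _ hT⟩

noncomputable def slrStep (a0 : Fin n → Fin ℓ) (K : ℕ) (f : Fin n → Fin ℓ)
    (E : List (Fin n × Fin n)) (e : Fin n × Fin n) : Fin n → Fin ℓ :=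
  if sameComp E e.1 e.2 then f
  else if ∀ j, load (mergeMove f E e) j ≤ n / ℓ + K then mergeMove f E e
  else rebalance a0 (E ++ [e])

noncomputable def smallLargeRebalanceRev (a0 : Fin n → Fin ℓ) (K : ℕ) :
    List (Fin n × Fin n) → Fin n → Fin ℓ
  | [] => a0
  | e :: l => slrStep a0 K (smallLargeRebalanceRev a0 K l) l.reverse e

noncomputable def smallLargeRebalance (K : ℕ) : OnlineAlg n ℓ :=
  fun a0 l => smallLargeRebalanceRev a0 K l.reverse

theorem smallLargeRebalance_nil (K : ℕ) (a0 : Fin n → Fin ℓ) :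
    smallLargeRebalance K a0 [] = a0 :=
  rfl

theorem smallLargeRebalance_append (K : ℕ) (a0 : Fin n → Fin ℓ) (l : List (Fin n × Fin n))
    (e : Fin n × Fin n) :
    smallLargeRebalance K a0 (l ++ [e]) = slrStep a0 K (smallLargeRebalance K a0 l) l e := by
  simp [smallLargeRebalance, smallLargeRebalanceRev]

end Algorithm

section Invariant

variable {n ℓ : ℕ} {a0 T f : Fin n → Fin ℓ} {K paid : ℕ} {E : List (Fin n × Fin n)}
  {e : Fin n × Fin n}

/-- `paid` is the number of moves so far. In `accounting`, `R` counts the rebalancings and `s`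
the vertices moved since the last one; a rebalancing costs at most `4 D + s`, where
`D = movesBetween a0 T`, and happens only after more than `K` moves, each paid for by the
potential. -/
structure SLRInvariant (a0 T : Fin n → Fin ℓ) (K : ℕ) (E : List (Fin n × Fin n))
    (f : Fin n → Fin ℓ) (paid : ℕ) : Prop where
  collocated : collocates E f
  load_le : ∀ j, load f j ≤ n / ℓ + K
  accounting : ∃ R s : ℕ, movesBetween f T ≤ 2 * movesBetween a0 T + s ∧
    (∀ j, load f j ≤ n / ℓ + s) ∧ (K + 1) * R + s ≤ pot E ∧
    paid + s ≤ 2 * pot E + 4 * movesBetween a0 T * R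

namespace SLRInvariant

theorem nil (ha0 : ∀ j, load a0 j = n / ℓ) : SLRInvariant a0 T K [] a0 0 where
  collocated u v h := by rw [sameComp_nil.1 h]
  load_le j := (ha0 j).trans_le (Nat.le_add_right _ _)
  accounting := ⟨0, 0, by omega, fun j => (ha0 j).le, by omega, by omega⟩

theorem append_of_sameComp (h : SLRInvariant a0 T K E f paid) (he : sameComp E e.1 e.2) :
    SLRInvariant a0 T K (E ++ [e]) f paid := by
  obtain ⟨R, s, hT, hload, hR, hpaid⟩ := h.accounting
  have hpot : pot E ≤ pot (E ++ [e]) := pot_mono fun _ _ => (mergesComps_append E e).sameComp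
  refine ⟨?_, h.load_le, R, s, hT, hload, by omega, by omega⟩
  rw [collocates_iff_forall_mem, List.forall_mem_append, List.forall_mem_singleton]
  exact ⟨collocates_iff_forall_mem.1 h.collocated, h.collocated _ _ he⟩

theorem append_mergeMove (h : SLRInvariant a0 T K E f paid) (he : ¬ sameComp E e.1 e.2)
    (hK : ∀ j, load (mergeMove f E e) j ≤ n / ℓ + K) :
    SLRInvariant a0 T K (E ++ [e]) (mergeMove f E e)
      (paid + movesBetween f (mergeMove f E e)) := by
  obtain ⟨R, s, hT, hload, hR, hpaid⟩ := h.accounting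
  set m := movesBetween f (mergeMove f E e)
  have hpot := pot_add_movesBetween_mergeMove_le f he
  refine ⟨collocates_mergeMove h.collocated he, hK, R, s + m, ?_, fun j => ?_, by omega,
    by omega⟩
  · have := movesBetween_triangle (mergeMove f E e) f T
    rw [movesBetween_comm (mergeMove f E e) f] at this
    omega
  · have := load_le_load_add_movesBetween f (mergeMove f E e) j
    have := hload j
    omega

theorem append_rebalance (h : SLRInvariant a0 T K E f paid) (he : ¬ sameComp E e.1 e.2)
    (hK : ¬ ∀ j, load (mergeMove f E e) j ≤ n / ℓ + K)
    (hTbal : T ∈ balancedCollocations (E ++ [e])) :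
    SLRInvariant a0 T K (E ++ [e]) (rebalance a0 (E ++ [e]))
      (paid + movesBetween f (rebalance a0 (E ++ [e]))) := by
  obtain ⟨R, s, hT, hload, hR, hpaid⟩ := h.accounting
  obtain ⟨⟨hcol, hbal⟩, hclose⟩ := rebalance_spec (a0 := a0) hTbal
  set S := rebalance a0 (E ++ [e])
  set m := movesBetween f (mergeMove f E e)
  have hpot := pot_add_movesBetween_mergeMove_le f he
  -- the overloaded server has received more than `K` vertices since the last rebalancing
  have htrigger : K + 1 ≤ s + m := by
    obtain ⟨j, hj⟩ := not_forall.1 hK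
    have := load_le_load_add_movesBetween f (mergeMove f E e) j
    have := hload j
    omega
  have hST : movesBetween S T ≤ 2 * movesBetween a0 T := by
    have := movesBetween_triangle S a0 T
    rw [movesBetween_comm S a0] at this
    omega
  have hfS : movesBetween f S ≤ 4 * movesBetween a0 T + s := by
    have := movesBetween_triangle f T S
    rw [movesBetween_comm T S] at this
    omega
  refine ⟨hcol, fun j => (hbal j).trans_le (Nat.le_add_right _ _), R + 1, 0, by omega,
    fun j => (hbal j).le, by rw [mul_add_one]; omega, by rw [mul_add_one]; omega⟩

theorem step (h : SLRInvariant a0 T K E f paid) (hTbal : T ∈ balancedCollocations (E ++ [e])) :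
    SLRInvariant a0 T K (E ++ [e]) (slrStep a0 K f E e)
      (paid + movesBetween f (slrStep a0 K f E e)) := by
  unfold slrStep
  split_ifs with he hK
  · simpa [movesBetween_self] using h.append_of_sameComp he
  · exact h.append_mergeMove he hK
  · exact h.append_rebalance he hK hTbal

theorem paid_le (h : SLRInvariant a0 T K E f paid) {ε : ℝ} (hε : 0 < ε)
    (hK : ε * n ≤ 4 * (1 + ε) * (K + 1)) :
    (paid : ℝ) ≤ 18 * (n * Real.logb 2 n + movesBetween a0 T * Real.logb 2 n / ε) := by
  obtain ⟨R, s, -, -, hR, hpaid⟩ := h.accounting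
  have hlog : (Nat.log 2 n : ℝ) ≤ Real.logb 2 n := by exact_mod_cast Real.natLog_le_logb n 2
  have hP : (pot E : ℝ) ≤ n * Real.logb 2 n := by
    calc (pot E : ℝ) ≤ (n * Nat.log 2 n : ℕ) := by exact_mod_cast pot_le E
      _ ≤ n * Real.logb 2 n := by push_cast; gcongr
  have hL : 0 ≤ Real.logb 2 n := (Nat.cast_nonneg _).trans hlog
  have hDn : (movesBetween a0 T : ℝ) ≤ n := by exact_mod_cast movesBetween_le a0 T
  have hRP : ((K : ℝ) + 1) * R ≤ pot E := by exact_mod_cast (by omega : (K + 1) * R ≤ pot E)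
  have hpaid' : (paid : ℝ) ≤ 2 * pot E + 4 * movesBetween a0 T * R := by
    exact_mod_cast (by omega : paid ≤ 2 * pot E + 4 * movesBetween a0 T * R)
  have hD := Nat.cast_nonneg (α := ℝ) (movesBetween a0 T)
  have hR0 := Nat.cast_nonneg (α := ℝ) R
  generalize (movesBetween a0 T : ℝ) = D at *
  generalize Real.logb 2 n = L at *
  generalize (pot E : ℝ) = P at *
  -- each rebalancing consumes `K + 1 ≥ εn / (4(1+ε))` units of potential
  have hDR : D * R * ε ≤ 4 * (1 + ε) * D * L := by
    rcases (Nat.cast_nonneg (α := ℝ) n).eq_or_lt with hn | hn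
    · simp [show D = 0 by linarith]
    · refine le_of_mul_le_mul_right ?_ hn
      calc D * R * ε * n = D * R * (ε * n) := by ring
        _ ≤ D * R * (4 * (1 + ε) * (K + 1)) := by gcongr
        _ = 4 * (1 + ε) * D * ((K + 1) * R) := by ring
        _ ≤ 4 * (1 + ε) * D * (n * L) := mul_le_mul_of_nonneg_left (hRP.trans hP) (by positivity)
        _ = 4 * (1 + ε) * D * L * n := by ring
  have hDR' : D * R ≤ 4 * (D * L / ε) + 4 * (D * L) := by
    rw [← le_div_iff₀ hε] at hDR
    calc D * R ≤ 4 * (1 + ε) * D * L / ε := hDR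
      _ = 4 * (D * L / ε) + 4 * (D * L) := by field_simp
  have hDL : D * L ≤ n * L := mul_le_mul_of_nonneg_right hDn hL
  have : 0 ≤ D * L / ε := by positivity
  linarith

end SLRInvariant

theorem slrInvariant_smallLargeRebalance (K : ℕ) (ha0 : ∀ j, load a0 j = n / ℓ)
    (hTload : ∀ j, load T j = n / ℓ) (l : List (Fin n × Fin n))
    (hT : ∀ e ∈ l, T e.1 = T e.2) :
    SLRInvariant a0 T K l (smallLargeRebalance K a0 l)
      (algMoves (smallLargeRebalance K) a0 l) := by
  induction l using List.reverseRecOn with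
  | nil => exact .nil ha0
  | append_singleton l e ih =>
    rw [algMoves_append (smallLargeRebalance_nil K a0), smallLargeRebalance_append]
    exact (ih fun e he => hT e (List.mem_append_left _ he)).step
      ⟨collocates_iff_forall_mem.2 hT, hTload⟩

end Invariant

section TwoServers

variable {n : ℕ}

theorem Fin.two_eq_rev_of_ne {x y : Fin 2} (h : x ≠ y) : x = y.rev := by
  revert x y
  decide

theorem eq_or_eq_rev_comp_of_isPerfect {τ g : Fin n → Fin 2} (h : isPerfect τ g) :
    g = τ ∨ g = Fin.rev ∘ τ := by
  by_cases hg : ∃ u, g u = τ u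
  · obtain ⟨u, hu⟩ := hg
    refine Or.inl (funext fun v => ?_)
    by_cases hv : τ v = τ u
    · rw [(h v u).2 hv, hu, hv]
    · have hgv : g v ≠ g u := fun h' => hv ((h v u).1 h')
      rw [hu] at hgv
      rw [Fin.two_eq_rev_of_ne hgv, ← Fin.two_eq_rev_of_ne hv]
  · simp only [not_exists] at hg
    exact Or.inr (funext fun v => Fin.two_eq_rev_of_ne (hg v))

theorem isPerfect_of_load_lt {τ f : Fin n → Fin 2} (hf : ∀ u v, τ u = τ v → f u = f v)
    (hload : ∀ u, load f (f u) < n) : isPerfect τ f := by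
  refine fun u v => ⟨fun huv => ?_, hf u v⟩
  by_contra hτ
  -- otherwise both ground-truth components lie on the server of `u`
  have hall : ∀ w, f w = f u := by
    intro w
    by_cases hw : τ w = τ u
    · exact hf w u hw
    · rw [hf w v (by rw [Fin.two_eq_rev_of_ne hw, ← Fin.two_eq_rev_of_ne (Ne.symm hτ)]), huv]
  have : load f (f u) = n := by simp [load, hall]
  exact (hload u).ne this

theorem exists_balanced_le_OPTmoves (I : ReInstance n 2) {ε : ℝ} (hε : 0 ≤ ε) :
    ∃ T : Fin n → Fin 2, (∀ e ∈ I.sigma, T e.1 = T e.2) ∧ (∀ j, load T j = n / 2) ∧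
      movesBetween I.init T ≤ OPTmoves ε I := by
  obtain ⟨T, hT, hTmin⟩ : ∃ T, (T = I.truth ∨ T = Fin.rev ∘ I.truth) ∧
      movesBetween I.init T =
        min (movesBetween I.init I.truth) (movesBetween I.init (Fin.rev ∘ I.truth)) := by
    rcases min_choice (movesBetween I.init I.truth) (movesBetween I.init (Fin.rev ∘ I.truth))
      with h | h
    · exact ⟨_, Or.inl rfl, h.symm⟩
    · exact ⟨_, Or.inr rfl, h.symm⟩
  refine ⟨T, ?_, ?_, ?_⟩
  · rcases hT with rfl | rfl
    · exact I.edges_within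
    · exact fun e he => congrArg Fin.rev (I.edges_within e he)
  · rcases hT with rfl | rfl
    · exact I.truth_size
    · exact fun j => (load_rev_comp _ j).trans (I.truth_size _)
  · have hvalid : validCap ε I.truth := fun j => by
      rw [I.truth_size]
      refine Nat.cast_div_le.trans ?_
      gcongr
      exact le_mul_of_one_le_left (Nat.cast_nonneg _) (by linarith)
    refine le_csInf ⟨_, fun _ => I.truth, fun _ => hvalid, fun _ _ => Iff.rfl, rfl⟩ ?_
    rintro _ ⟨g, -, hperf, rfl⟩
    refine (hTmin.trans_le ?_).trans (movesBetween_le_schedMoves _ _ g)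
    rcases eq_or_eq_rev_comp_of_isPerfect hperf with h | h <;> rw [h]
    exacts [min_le_left _ _, min_le_right _ _]

end TwoServers

/-- **Small–Large–Rebalance with efficient rebalancing, two servers.**
There is a universal constant `C` such that for all `n`, `α > 1`, `ε > 0` with `2 ∣ n`
there is a deterministic online algorithm for two servers of capacity `(1+ε)·n/2` which
always keeps every currently-revealed connected component on one server, never exceeds
the capacities, ends with each ground-truth component alone on one server, and performs
at most `C·(n·log₂ n + (M·log₂ n)/ε)` vertex moves on every instance, where `M` is the
number of vertex moves performed by the optimal offline algorithm on that instance. -/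
theorem stmt4 :
    ∃ C : ℝ, 0 < C ∧
      ∀ (n : ℕ) (α ε : ℝ), 1 < α → 0 < ε → 2 ∣ n →
        ∃ A : OnlineAlg n 2, ∀ I : ReInstance n 2,
          (∀ t, collocates (I.sigma.take t) (state A I.init I.sigma t)) ∧
          (∀ t, validCap ε (state A I.init I.sigma t)) ∧
          isPerfect I.truth (state A I.init I.sigma I.sigma.length) ∧
          (algMoves A I.init I.sigma : ℝ) ≤
            C * ((n : ℝ) * Real.logb 2 n + ((OPTmoves ε I : ℝ) * Real.logb 2 n) / ε) := by
  refine ⟨18, by norm_num, fun n α ε _ hε _ => ?_⟩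
  -- `K ≤ εn/4` keeps the loads below both the capacity and `n`, while `K + 1 > εn/(4(1+ε))`
  set K := ⌊ε * n / (4 * (1 + ε))⌋₊
  have hK : (K : ℝ) * (4 * (1 + ε)) ≤ ε * n :=
    (le_div_iff₀ (by positivity)).1 (Nat.floor_le (by positivity))
  have hK' : ε * n ≤ 4 * (1 + ε) * (K + 1) := by
    have := (div_lt_iff₀ (by positivity)).1 (Nat.lt_floor_add_one (ε * n / (4 * (1 + ε))))
    linarith
  refine ⟨smallLargeRebalance K, fun I => ?_⟩
  obtain ⟨T, hTσ, hTload, hTopt⟩ := exists_balanced_le_OPTmoves I hε.le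
  set S := state (smallLargeRebalance K) I.init I.sigma with hS
  have hinv : ∀ t, SLRInvariant I.init T K (I.sigma.take t) (S t)
      (algMoves (smallLargeRebalance K) I.init (I.sigma.take t)) := fun t => by
    rw [hS, state_eq_take (smallLargeRebalance_nil K I.init)]
    exact slrInvariant_smallLargeRebalance K I.init_size hTload _
      fun e he => hTσ e (List.take_subset t I.sigma he)
  have hfinal := hinv I.sigma.length
  rw [List.take_length] at hfinal
  have hload : ∀ t j, (load (S t) j : ℝ) ≤ n / 2 + K := fun t j =>
    calc (load (S t) j : ℝ) ≤ ((n / 2 : ℕ) : ℝ) + K := by exact_mod_cast (hinv t).load_le j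
      _ ≤ n / 2 + K := by gcongr; exact Nat.cast_div_le
  refine ⟨fun t => (hinv t).collocated, fun t j => (hload t j).trans (by nlinarith), ?_, ?_⟩
  · refine isPerfect_of_load_lt (fun u v h => hfinal.collocated u v ((I.reveals u v).2 h))
      fun u => ?_
    have hn : (0 : ℝ) < n := Nat.cast_pos.2 u.pos
    have := hload I.sigma.length (S I.sigma.length u)
    rw [← Nat.cast_lt (α := ℝ)]
    nlinarith
  · refine (hfinal.paid_le hε hK').trans ?_
    have hL : 0 ≤ Real.logb 2 n := (Nat.cast_nonneg _).trans (Real.natLog_le_logb n 2)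
    gcongr
end

section
/- Let T be a finite binary tree in which every leaf z carries a nonnegative integer weight c(z), and let W be the total weight of all leaves. Define the greedy descent: starting at the root, at each internal node descend into the child whose subtree has total leaf weight at least that of the other child (ties broken arbitrarily), until a leaf is reached; let g be the weight of the leaf reached by the greedy descent. Then for every leaf z of T, W − g ≤ 2·(W − c(z)). In particular, the number of vertices moved by the greedy top–down bipartitioning procedure (which at each bipartition marks the minority side as moved) is at most twice the number moved by any procedure that collects all weight at a single leaf, i.e., the greedy offline approximation algorithm has cost at most 2 times the optimal offline cost. -/
/-!
Induct along the greedy path. At a node whose heavy child `h` is followed and whose light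
child has weight `b ≤ h.weight`, an optimal leaf `c` inside `h` is handled by the induction
hypothesis, since both sides then grow by the weight `b` that is moved anyway. If instead `c`
lies on the light side, then `W - c ≥ h.weight ≥ W / 2`, so even `W - g ≤ W` is within the
factor two.
-/

/-- A binary tree whose leaves carry nonnegative integer weights. -/
inductive BTree where
  | leaf : ℕ → BTree
  | node : BTree → BTree → BTree

/-- The total weight of the leaves of a binary tree. -/
def BTree.weight : BTree → ℕ
  | .leaf c => c
  | .node l r => l.weight + r.weight

/-- The multiset of leaf weights of a binary tree. -/
def BTree.leaves : BTree → Multiset ℕ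
  | .leaf c => {c}
  | .node l r => l.leaves + r.leaves

/-- `T.IsGreedyLeaf g` holds iff `g` is the weight of a leaf reachable by a greedy
descent: starting at the root, always descend into the child whose subtree has total
leaf weight at least that of the other child (ties broken arbitrarily). -/
inductive BTree.IsGreedyLeaf : BTree → ℕ → Prop
  | leaf (c : ℕ) : BTree.IsGreedyLeaf (.leaf c) c
  | left {l r : BTree} {g : ℕ} :
      r.weight ≤ l.weight → l.IsGreedyLeaf g → BTree.IsGreedyLeaf (.node l r) g
  | right {l r : BTree} {g : ℕ} :
      l.weight ≤ r.weight → r.IsGreedyLeaf g → BTree.IsGreedyLeaf (.node l r) g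

namespace BTree

theorem weight_eq_sum_leaves : ∀ T : BTree, T.weight = T.leaves.sum
  | .leaf c => by simp [weight, leaves]
  | .node l r => by simp [weight, leaves, weight_eq_sum_leaves l, weight_eq_sum_leaves r]

theorem le_weight_of_mem_leaves {T : BTree} {c : ℕ} (hc : c ∈ T.leaves) : c ≤ T.weight :=
  T.weight_eq_sum_leaves ▸ Multiset.le_sum_of_mem hc

theorem IsGreedyLeaf.mem_leaves {T : BTree} {g : ℕ} (hg : T.IsGreedyLeaf g) : g ∈ T.leaves := by
  induction hg with
  | leaf c => simp [leaves]
  | left _ _ ih => exact Multiset.mem_add.2 (.inl ih)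
  | right _ _ ih => exact Multiset.mem_add.2 (.inr ih)

theorem weight_node_comm (l r : BTree) : (node l r).weight = (node r l).weight :=
  Nat.add_comm _ _

theorem leaves_node_comm (l r : BTree) : (node l r).leaves = (node r l).leaves :=
  add_comm _ _

theorem weight_sub_le_of_heavy_child {h b : BTree} {g : ℕ} (hbh : b.weight ≤ h.weight)
    (hg : g ∈ h.leaves) (ih : ∀ c ∈ h.leaves, h.weight - g ≤ 2 * (h.weight - c)) :
    ∀ c ∈ (node h b).leaves, (node h b).weight - g ≤ 2 * ((node h b).weight - c) := by
  intro c hc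
  have hgh := le_weight_of_mem_leaves hg
  rw [leaves, Multiset.mem_add] at hc
  rw [weight]
  rcases hc with hc_heavy | hc_light
  · have := ih c hc_heavy
    have := le_weight_of_mem_leaves hc_heavy
    omega
  · have := le_weight_of_mem_leaves hc_light
    omega

end BTree

/-- Let `T` be a finite binary tree with nonnegative integer leaf
weights, total weight `W`, and let `g` be the weight of the leaf reached by a greedy
descent. Then for every leaf weight `c` of `T`, `W − g ≤ 2·(W − c)`: the greedy
top-down bipartitioning procedure moves at most twice as much weight as any procedure
collecting all weight at a single leaf. -/
theorem stmt7 (T : BTree) (g : ℕ) (hg : T.IsGreedyLeaf g) :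
    ∀ c ∈ T.leaves, T.weight - g ≤ 2 * (T.weight - c) := by
  induction hg with
  | leaf w => simp [BTree.leaves, BTree.weight]
  | left hrl hl ih => exact BTree.weight_sub_le_of_heavy_child hrl hl.mem_leaves ih
  | @right l r _ hlr hr ih =>
    rw [BTree.weight_node_comm l r, BTree.leaves_node_comm l r]
    exact BTree.weight_sub_le_of_heavy_child hlr hr.mem_leaves ih
end

section
/- There is a universal constant C such that the following holds for all n, all ℓ ≥ 2 dividing n, all α > 1 and all ε > 0. There exists a deterministic online algorithm for the online re-embedding model with ℓ servers, each of capacity (1+ε)·n/ℓ, which always keeps every currently-revealed connected component on a single server, never exceeds the server capacities, ends with each ground-truth component alone on one server, and whose total cost on every instance is at most C·(α·n·log₂ n + OPT·(ℓ·log₂ n)/ε), where OPT denotes the optimal offline cost on that instance. -/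
/-!
The algorithm is Small–Large–Rebalance. When a request joins two revealed components, the
smaller one moves to the server of the larger one, as long as at most `ε n / ℓ` vertices have
been moved since the last rebalancing; when that budget would be exceeded, or when the revealed
components become the ground-truth ones, it jumps to the assignment nearest to the initial one
among those with loads at most `n / ℓ` that keep the revealed components together. Loads thus
never exceed `(1 + ε) n / ℓ`.

A vertex on the small side of a merge at least doubles the size of its component, so the total
weight `V` of the small sides is at most `n log₂ n`; it bounds the communication cost too, since
a request that pays communication merges two components. A nearest perfect assignment, at
distance `D` from the initial one, is a candidate for every rebalancing, so a rebalancing costs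
at most the budget spent since the last one plus `2 D`, and `α D ≤ OPT`. Every rebalancing but
the last consumes a budget of `ε n / ℓ` out of `V`, so there are at most `ℓ log₂ n / ε + 1`.
-/

open Finset

namespace ReEmbedding

open Classical

variable {n ℓ : ℕ}

theorem sum_range_add_le_of_step {M : Type*} [AddCommMonoid M] [PartialOrder M]
    [IsOrderedAddMonoid M] {m a b : ℕ → M} {T : ℕ} (h : ∀ t < T, m t + a (t + 1) ≤ a t + b t) :
    ∑ t ∈ range T, m t + a T ≤ a 0 + ∑ t ∈ range T, b t := by
  induction T with
  | zero => simp
  | succ T ih =>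
    calc ∑ t ∈ range (T + 1), m t + a (T + 1)
        = ∑ t ∈ range T, m t + (m T + a (T + 1)) := by rw [sum_range_succ, add_assoc]
      _ ≤ ∑ t ∈ range T, m t + (a T + b T) := add_le_add le_rfl (h T T.lt_add_one)
      _ = (∑ t ∈ range T, m t + a T) + b T := by rw [add_assoc]
      _ ≤ (a 0 + ∑ t ∈ range T, b t) + b T :=
          add_le_add (ih fun t ht => h t (ht.trans T.lt_add_one)) le_rfl
      _ = a 0 + ∑ t ∈ range (T + 1), b t := by rw [sum_range_succ, add_assoc]

section Components

theorem sameComp_mono {E E' : List (Fin n × Fin n)} (h : E ⊆ E') {u v : Fin n}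
    (huv : sameComp E u v) : sameComp E' u v :=
  Relation.EqvGen.mono (fun _ _ => Or.imp (@h _) (@h _)) _ _ huv

theorem sameComp_append_singleton_iff {E : List (Fin n × Fin n)} {e : Fin n × Fin n}
    (he : sameComp E e.1 e.2) {u v : Fin n} : sameComp (E ++ [e]) u v ↔ sameComp E u v := by
  refine ⟨fun huv => ?_, sameComp_mono (List.subset_append_left _ _)⟩
  refine (Relation.EqvGen.is_equivalence _).eqvGen_iff.1 (Relation.EqvGen.mono ?_ _ _ huv)
  rintro a b (hab | hab) <;> rcases List.mem_append.1 hab with hab | hab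
  · exact Relation.EqvGen.rel _ _ (Or.inl hab)
  · obtain rfl := List.mem_singleton.1 hab; exact he
  · exact Relation.EqvGen.rel _ _ (Or.inr hab)
  · obtain rfl := List.mem_singleton.1 hab; exact Relation.EqvGen.symm _ _ he

theorem collocates_iff_forall_mem {E : List (Fin n × Fin n)} {g : Fin n → Fin ℓ} :
    collocates E g ↔ ∀ p ∈ E, g p.1 = g p.2 := by
  refine ⟨fun h p hp => h _ _ (Relation.EqvGen.rel _ _ (Or.inl hp)), fun h u v huv => ?_⟩
  induction huv with
  | rel a b hab => exact hab.elim (h _) fun hba => (h _ hba).symm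
  | refl => rfl
  | symm _ _ _ ih => exact ih.symm
  | trans _ _ _ _ _ ih₁ ih₂ => exact ih₁.trans ih₂

theorem collocates_append_singleton {E : List (Fin n × Fin n)} {e : Fin n × Fin n}
    {g : Fin n → Fin ℓ} : collocates (E ++ [e]) g ↔ collocates E g ∧ g e.1 = g e.2 := by
  simp [collocates_iff_forall_mem, or_imp, forall_and]

noncomputable def component (E : List (Fin n × Fin n)) (v : Fin n) : Finset (Fin n) :=
  {u | sameComp E u v}

variable {E : List (Fin n × Fin n)}

@[simp]
theorem mem_component {u v : Fin n} : u ∈ component E v ↔ sameComp E u v := by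
  simp [component]

theorem component_eq_of_sameComp {u v : Fin n} (h : sameComp E u v) :
    component E u = component E v := by
  ext w
  simp only [mem_component]
  exact ⟨fun hw => Relation.EqvGen.trans _ _ _ hw h,
    fun hw => Relation.EqvGen.trans _ _ _ hw (Relation.EqvGen.symm _ _ h)⟩

theorem disjoint_component {u v : Fin n} (h : ¬ sameComp E u v) :
    Disjoint (component E u) (component E v) :=
  Finset.disjoint_left.2 fun _ hu hv =>
    h (Relation.EqvGen.trans _ _ _ (Relation.EqvGen.symm _ _ (mem_component.1 hu))
      (mem_component.1 hv))

theorem component_subset_component {E' : List (Fin n × Fin n)} (h : E ⊆ E') (v : Fin n) :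
    component E v ⊆ component E' v :=
  fun _ hu => mem_component.2 (sameComp_mono h (mem_component.1 hu))

theorem card_component_pos (v : Fin n) : 0 < #(component E v) :=
  Finset.card_pos.2 ⟨v, mem_component.2 (Relation.EqvGen.refl v)⟩

end Components

section Moves

theorem movesBetween_triangle (f g h : Fin n → Fin ℓ) :
    movesBetween f h ≤ movesBetween f g + movesBetween g h :=
  hammingDist_triangle f g h

theorem movesBetween_comm (f g : Fin n → Fin ℓ) : movesBetween f g = movesBetween g f :=
  hammingDist_comm f g

theorem movesBetween_le_card (f g : Fin n → Fin ℓ) : movesBetween f g ≤ n :=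
  hammingDist_le_card_fintype.trans_eq (Fintype.card_fin n)

end Moves

section SmallSide

variable {E : List (Fin n × Fin n)} {e : Fin n × Fin n}

noncomputable def orient (E : List (Fin n × Fin n)) (e : Fin n × Fin n) : Fin n × Fin n :=
  if #(component E e.1) ≤ #(component E e.2) then e else e.swap

theorem orient_eq_or : orient E e = e ∨ orient E e = e.swap := by
  unfold orient; split_ifs <;> simp

theorem card_component_orient_le :
    #(component E (orient E e).1) ≤ #(component E (orient E e).2) := by
  unfold orient; split_ifs with h
  · exact h
  · exact (not_le.1 h).le

theorem sameComp_orient_iff (E' : List (Fin n × Fin n)) :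
    sameComp E' (orient E e).1 (orient E e).2 ↔ sameComp E' e.1 e.2 := by
  rcases orient_eq_or (E := E) (e := e) with h | h <;> rw [h]
  exact ⟨Relation.EqvGen.symm _ _, Relation.EqvGen.symm _ _⟩

noncomputable def smallSide (E : List (Fin n × Fin n)) (e : Fin n × Fin n) : Finset (Fin n) :=
  if sameComp E e.1 e.2 then ∅ else component E (orient E e).1

theorem smallSide_of_sameComp (h : sameComp E e.1 e.2) : smallSide E e = ∅ := if_pos h

theorem smallSide_of_not_sameComp (h : ¬ sameComp E e.1 e.2) :
    smallSide E e = component E (orient E e).1 := if_neg h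

theorem card_smallSide_pos (h : ¬ sameComp E e.1 e.2) : 0 < #(smallSide E e) := by
  rw [smallSide_of_not_sameComp h]; exact card_component_pos _

theorem orient_snd_notMem_smallSide : (orient E e).2 ∉ smallSide E e := by
  unfold smallSide; split_ifs with h
  · exact Finset.notMem_empty _
  · exact fun h' => h ((sameComp_orient_iff E).1 (Relation.EqvGen.symm _ _ (mem_component.1 h')))

theorem mem_smallSide_congr {u v : Fin n} (huv : sameComp E u v) :
    u ∈ smallSide E e ↔ v ∈ smallSide E e := by
  unfold smallSide; split_ifs
  · simp
  · simp only [mem_component]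
    exact ⟨Relation.EqvGen.trans _ _ _ (Relation.EqvGen.symm _ _ huv),
      Relation.EqvGen.trans _ _ _ huv⟩

theorem two_mul_card_component_le {v : Fin n} (hv : v ∈ smallSide E e) :
    2 * #(component E v) ≤ #(component (E ++ [e]) v) := by
  have hm : ¬ sameComp E e.1 e.2 := fun h => by simp [smallSide_of_sameComp h] at hv
  rw [smallSide_of_not_sameComp hm] at hv
  have hxy : sameComp (E ++ [e]) (orient E e).1 (orient E e).2 := (sameComp_orient_iff _).2
    (Relation.EqvGen.rel _ _ (Or.inl (List.mem_append_right _ (List.mem_singleton_self e))))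
  have hsub : component E (orient E e).1 ∪ component E (orient E e).2 ⊆
      component (E ++ [e]) v := by
    rw [component_eq_of_sameComp (sameComp_mono (List.subset_append_left _ _)
      (mem_component.1 hv)), component_eq_of_sameComp hxy]
    exact Finset.union_subset
      ((component_eq_of_sameComp hxy) ▸ component_subset_component (List.subset_append_left _ _) _)
      (component_subset_component (List.subset_append_left _ _) _)
  have hcard := Finset.card_le_card hsub
  rw [Finset.card_union_of_disjoint
    (disjoint_component fun h => hm ((sameComp_orient_iff E).1 h))] at hcard
  rw [component_eq_of_sameComp (mem_component.1 hv)]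
  have := card_component_orient_le (E := E) (e := e)
  omega

noncomputable def moveSmall (f : Fin n → Fin ℓ) (E : List (Fin n × Fin n))
    (e : Fin n × Fin n) : Fin n → Fin ℓ :=
  fun u => if u ∈ smallSide E e then f (orient E e).2 else f u

theorem movesBetween_moveSmall_le (f : Fin n → Fin ℓ) :
    movesBetween f (moveSmall f E e) ≤ #(smallSide E e) := by
  refine Finset.card_le_card fun u hu => ?_
  by_contra h
  simp [moveSmall, h] at hu

noncomputable def load (g : Fin n → Fin ℓ) (j : Fin ℓ) : ℕ := #{v | g v = j}

theorem load_moveSmall_le (f : Fin n → Fin ℓ) (j : Fin ℓ) :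
    load (moveSmall f E e) j ≤ load f j + #(smallSide E e) := by
  refine (Finset.card_le_card fun u hu => ?_).trans (Finset.card_union_le _ _)
  by_cases h : u ∈ smallSide E e
  · exact Finset.mem_union_right _ h
  · refine Finset.mem_union_left _ ?_
    rw [Finset.mem_filter] at hu ⊢
    simpa [moveSmall, h] using hu

theorem collocates_moveSmall {f : Fin n → Fin ℓ} (hf : collocates E f) :
    collocates (E ++ [e]) (moveSmall f E e) := by
  refine collocates_append_singleton.2 ⟨fun u v huv => ?_, ?_⟩
  · simp only [moveSmall, mem_smallSide_congr huv]
    split_ifs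
    · rfl
    · exact hf u v huv
  by_cases h : sameComp E e.1 e.2
  · simpa [moveSmall, smallSide_of_sameComp h] using hf _ _ h
  have hx : (orient E e).1 ∈ smallSide E e := by
    rw [smallSide_of_not_sameComp h]; exact mem_component.2 (Relation.EqvGen.refl _)
  have hy := orient_snd_notMem_smallSide (E := E) (e := e)
  rcases orient_eq_or (E := E) (e := e) with he | he <;> rw [he] at hx hy <;>
    simp_all [moveSmall]

end SmallSide

section Step

def Balanced (k : ℕ) (g : Fin n → Fin ℓ) : Prop := ∀ j, load g j ≤ k

def Complete (k : ℕ) (E : List (Fin n × Fin n)) : Prop := ∀ v, #(component E v) = k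

variable {E : List (Fin n × Fin n)} {e : Fin n × Fin n}

theorem complete_append_singleton_iff {k : ℕ} (h : sameComp E e.1 e.2) :
    Complete k (E ++ [e]) ↔ Complete k E := by
  simp [Complete, component, sameComp_append_singleton_iff h]

noncomputable def rebalance (a0 : Fin n → Fin ℓ) (E : List (Fin n × Fin n)) : Fin n → Fin ℓ :=
  if h : ∃ g : Fin n → Fin ℓ, Balanced (n / ℓ) g ∧ collocates E g then
    Function.argminOn (movesBetween a0) {g | Balanced (n / ℓ) g ∧ collocates E g} h
  else a0

theorem rebalance_spec {a0 g : Fin n → Fin ℓ} (hg : Balanced (n / ℓ) g)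
    (hgE : collocates E g) :
    Balanced (n / ℓ) (rebalance a0 E) ∧ collocates E (rebalance a0 E) ∧
      movesBetween a0 (rebalance a0 E) ≤ movesBetween a0 g := by
  have h : ∃ g : Fin n → Fin ℓ, Balanced (n / ℓ) g ∧ collocates E g := ⟨g, hg, hgE⟩
  rw [rebalance, dif_pos h]
  exact ⟨(Function.argminOn_mem _ _ h).1, (Function.argminOn_mem _ _ h).2,
    Function.argminOn_le (movesBetween a0) {g | Balanced (n / ℓ) g ∧ collocates E g} ⟨hg, hgE⟩⟩

/-- `moved` counts the vertices moved since the last rebalancing. -/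
structure Config (n ℓ : ℕ) where
  assign : Fin n → Fin ℓ
  moved : ℕ

def Overflows (cap : ℝ) (c : Config n ℓ) (E : List (Fin n × Fin n)) (e : Fin n × Fin n) :
    Prop :=
  ¬ sameComp E e.1 e.2 ∧ cap < c.moved + #(smallSide E e)

def Completes (k : ℕ) (E : List (Fin n × Fin n)) (e : Fin n × Fin n) : Prop :=
  ¬ sameComp E e.1 e.2 ∧ Complete k (E ++ [e])

noncomputable def step (cap : ℝ) (a0 : Fin n → Fin ℓ) (c : Config n ℓ)
    (E : List (Fin n × Fin n)) (e : Fin n × Fin n) : Config n ℓ :=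
  if Overflows cap c E e ∨ Completes (n / ℓ) E e then ⟨rebalance a0 (E ++ [e]), 0⟩
  else ⟨moveSmall c.assign E e, c.moved + #(smallSide E e)⟩

structure Invariant (cap : ℝ) (a0 g : Fin n → Fin ℓ) (E : List (Fin n × Fin n))
    (c : Config n ℓ) : Prop where
  collocated : collocates E c.assign
  load_le : ∀ j, load c.assign j ≤ n / ℓ + c.moved
  moved_le : (c.moved : ℝ) ≤ cap
  movesBetween_le : movesBetween a0 c.assign ≤ movesBetween a0 g + c.moved
  moved_eq_zero : Complete (n / ℓ) E → c.moved = 0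

variable {cap : ℝ} {a0 g : Fin n → Fin ℓ} {c : Config n ℓ}

theorem Invariant.step (h : Invariant cap a0 g E c) (hg : Balanced (n / ℓ) g)
    (hgE : collocates (E ++ [e]) g) : Invariant cap a0 g (E ++ [e]) (step cap a0 c E e) := by
  obtain ⟨hbal, hcol, hdist⟩ := rebalance_spec (a0 := a0) hg hgE
  have hcap : (0 : ℝ) ≤ cap := (Nat.cast_nonneg _).trans h.moved_le
  unfold ReEmbedding.step
  split_ifs with hreb
  · exact ⟨hcol, fun j => (hbal j).trans (Nat.le_add_right _ _), by simpa using hcap,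
      hdist, fun _ => rfl⟩
  · obtain ⟨hO, hC⟩ := not_or.1 hreb
    refine ⟨collocates_moveSmall h.collocated, fun j => ?_, ?_, ?_, fun hE => ?_⟩
    · have := load_moveSmall_le c.assign (E := E) (e := e) j
      have := h.load_le j
      dsimp only
      omega
    · by_cases hm : sameComp E e.1 e.2
      · simpa [smallSide_of_sameComp hm] using h.moved_le
      · push_cast; exact not_lt.1 fun hlt => hO ⟨hm, hlt⟩
    · have := movesBetween_triangle a0 c.assign (moveSmall c.assign E e)
      have := movesBetween_moveSmall_le c.assign (E := E) (e := e)
      have := h.movesBetween_le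
      dsimp only
      omega
    · by_cases hm : sameComp E e.1 e.2
      · rw [smallSide_of_sameComp hm, Finset.card_empty, add_zero]
        exact h.moved_eq_zero ((complete_append_singleton_iff hm).1 hE)
      · exact absurd ⟨hm, hE⟩ hC

theorem movesBetween_step_add_le {D : ℕ} (hc : movesBetween a0 c.assign ≤ D + c.moved)
    (hD : movesBetween a0 (rebalance a0 (E ++ [e])) ≤ D) :
    movesBetween c.assign (step cap a0 c E e).assign + (step cap a0 c E e).moved ≤
      c.moved + 2 * #(smallSide E e) +
        ((if Overflows cap c E e then 2 * D else 0) +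
          (if Completes (n / ℓ) E e then 2 * D else 0)) := by
  have := movesBetween_triangle c.assign a0 (rebalance a0 (E ++ [e]))
  rw [movesBetween_comm c.assign a0] at this
  have := movesBetween_moveSmall_le c.assign (E := E) (e := e)
  by_cases hO : Overflows cap c E e <;> by_cases hC : Completes (n / ℓ) E e <;>
    simp only [ReEmbedding.step, hO, hC, or_self, or_true, true_or, if_true, if_false] <;>
    omega

theorem overflow_add_moved_step_le :
    (if Overflows cap c E e then cap else 0) + ((step cap a0 c E e).moved : ℝ) ≤
      c.moved + #(smallSide E e) := by
  by_cases hO : Overflows cap c E e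
  · simpa [ReEmbedding.step, hO] using hO.2.le
  · by_cases hC : Completes (n / ℓ) E e <;> simp [ReEmbedding.step, hO, hC]
    positivity

theorem validCap_of_load_le {ε : ℝ} {f : Fin n → Fin ℓ} {m : ℕ}
    (hf : ∀ j, load f j ≤ n / ℓ + m) (hm : (m : ℝ) ≤ ε * n / ℓ) : validCap ε f := by
  intro j
  calc (#{v | f v = j} : ℝ) ≤ ((n / ℓ : ℕ) : ℝ) + m := by exact_mod_cast hf j
    _ ≤ n / ℓ + ε * n / ℓ := add_le_add Nat.cast_div_le hm
    _ = (1 + ε) * n / ℓ := by ring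

end Step

section Run

noncomputable def run (cap : ℝ) (a0 : Fin n → Fin ℓ) (σ : List (Fin n × Fin n)) :
    ℕ → Config n ℓ
  | 0 => ⟨a0, 0⟩
  | t + 1 => if h : t < σ.length then step cap a0 (run cap a0 σ t) (σ.take t) σ[t]
      else run cap a0 σ t

noncomputable def algo (cap : ℝ) : OnlineAlg n ℓ := fun a0 E => (run cap a0 E E.length).assign

variable {cap : ℝ} {a0 : Fin n → Fin ℓ} {σ : List (Fin n × Fin n)}

@[simp]
theorem run_zero : run cap a0 σ 0 = ⟨a0, 0⟩ := rfl

theorem run_succ {t : ℕ} (ht : t < σ.length) :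
    run cap a0 σ (t + 1) = step cap a0 (run cap a0 σ t) (σ.take t) σ[t] :=
  dif_pos ht

theorem run_take {s t : ℕ} (h : t ≤ s) : run cap a0 (σ.take s) t = run cap a0 σ t := by
  induction t with
  | zero => rfl
  | succ t ih =>
    by_cases ht : t < σ.length
    · rw [run_succ ht, run_succ (by rw [List.length_take]; omega), ih (by omega)]
      simp [List.take_take, show min t s = t by omega]
    · rw [run, run, dif_neg ht, dif_neg (by rw [List.length_take]; omega), ih (by omega)]

theorem state_algo (t : ℕ) :
    state (algo cap) a0 σ t = (run cap a0 σ (min t σ.length)).assign := by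
  cases t with
  | zero => rfl
  | succ t => simp [state, algo, run_take (min_le_left (t + 1) σ.length)]

end Run

section Charging

noncomputable def smallSideAt (σ : List (Fin n × Fin n)) (t : ℕ) : Finset (Fin n) :=
  if h : t < σ.length then smallSide (σ.take t) σ[t] else ∅

def OverflowsAt (cap : ℝ) (a0 : Fin n → Fin ℓ) (σ : List (Fin n × Fin n)) (t : ℕ) : Prop :=
  ∃ h : t < σ.length, Overflows cap (run cap a0 σ t) (σ.take t) σ[t]

def CompletesAt (k : ℕ) (σ : List (Fin n × Fin n)) (t : ℕ) : Prop :=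
  ∃ h : t < σ.length, Completes k (σ.take t) σ[t]

variable (σ : List (Fin n × Fin n))

theorem smallSideAt_of_lt {t : ℕ} (ht : t < σ.length) :
    smallSideAt σ t = smallSide (σ.take t) σ[t] :=
  dif_pos ht

theorem two_pow_card_le_card_component (v : Fin n) {T : ℕ} (hT : T ≤ σ.length) :
    2 ^ #{t ∈ range T | v ∈ smallSideAt σ t} ≤ #(component (σ.take T) v) := by
  induction T with
  | zero => simpa using card_component_pos v
  | succ T ih =>
    have hT' : T < σ.length := hT
    have hsub := component_subset_component (List.subset_append_left (σ.take T) [σ[T]]) v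
    rw [List.take_succ_eq_append_getElem hT', range_add_one, filter_insert]
    split_ifs with hv
    · rw [smallSideAt_of_lt σ hT'] at hv
      rw [card_insert_of_notMem (by simp), pow_succ]
      have := two_mul_card_component_le hv
      have := ih hT'.le
      omega
    · exact (ih hT'.le).trans (card_le_card hsub)

theorem sum_card_smallSideAt_le : ∑ t ∈ range σ.length, #(smallSideAt σ t) ≤ n * Nat.log 2 n := by
  have hcount (v : Fin n) : #{t ∈ range σ.length | v ∈ smallSideAt σ t} ≤ Nat.log 2 n :=
    Nat.le_log_of_pow_le one_lt_two ((two_pow_card_le_card_component σ v le_rfl).trans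
      ((card_le_univ _).trans_eq (Fintype.card_fin n)))
  calc ∑ t ∈ range σ.length, #(smallSideAt σ t)
      = ∑ v : Fin n, #{t ∈ range σ.length | v ∈ smallSideAt σ t} := by
        simpa [bipartiteAbove, bipartiteBelow] using
          sum_card_bipartiteAbove_eq_sum_card_bipartiteBelow (fun t v => v ∈ smallSideAt σ t)
            (s := range σ.length) (t := univ)
    _ ≤ ∑ _v : Fin n, Nat.log 2 n := sum_le_sum fun v _ => hcount v
    _ = n * Nat.log 2 n := by simp

theorem card_overflowsAt_mul_le (cap : ℝ) (a0 : Fin n → Fin ℓ) :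
    (#{t ∈ range σ.length | OverflowsAt cap a0 σ t} : ℝ) * cap ≤
      ((∑ t ∈ range σ.length, #(smallSideAt σ t) : ℕ) : ℝ) := by
  have hstep : ∀ t < σ.length,
      (if OverflowsAt cap a0 σ t then cap else 0) + ((run cap a0 σ (t + 1)).moved : ℝ) ≤
        (run cap a0 σ t).moved + #(smallSideAt σ t) := by
    intro t ht
    simp only [run_succ ht, smallSideAt_of_lt _ ht, OverflowsAt, exists_prop_of_true ht]
    exact overflow_add_moved_step_le
  have htel := sum_range_add_le_of_step (a := fun t => ((run cap a0 σ t).moved : ℝ)) hstep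
  simp only [sum_ite, sum_const_zero, add_zero, sum_const, nsmul_eq_mul, run_zero,
    Nat.cast_zero, zero_add] at htel
  push_cast
  linarith [(Nat.cast_nonneg (run cap a0 σ σ.length).moved : (0 : ℝ) ≤ _)]

theorem cast_sum_card_smallSideAt_le :
    ((∑ t ∈ range σ.length, #(smallSideAt σ t) : ℕ) : ℝ) ≤ n * Real.logb 2 n :=
  calc _ ≤ ((n * Nat.log 2 n : ℕ) : ℝ) := by exact_mod_cast sum_card_smallSideAt_le σ
    _ ≤ n * Real.logb 2 n := by push_cast; gcongr; exact Real.natLog_le_logb n 2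

theorem card_overflowsAt_mul_le_logb {ε : ℝ} (a0 : Fin n → Fin ℓ) (hn : 0 < n) (hℓ : 0 < ℓ) :
    (#{t ∈ range σ.length | OverflowsAt (ε * n / ℓ) a0 σ t} : ℝ) * ε ≤ ℓ * Real.logb 2 n := by
  have h := (card_overflowsAt_mul_le σ (ε * n / ℓ) a0).trans (cast_sum_card_smallSideAt_le σ)
  rw [← mul_div_assoc, div_le_iff₀ (by exact_mod_cast hℓ)] at h
  refine le_of_mul_le_mul_right ?_ (show (0 : ℝ) < n by exact_mod_cast hn)
  linarith

end Charging

section Instance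

variable (I : ReInstance n ℓ) {g : Fin n → Fin ℓ}

theorem isPerfect_truth : isPerfect I.truth I.truth := fun _ _ => Iff.rfl

theorem collocates_take_of_isPerfect (hg : isPerfect I.truth g) (t : ℕ) :
    collocates (I.sigma.take t) g := fun u v huv =>
  (hg u v).2 ((I.reveals u v).1 (sameComp_mono (List.take_subset t _) huv))

theorem balanced_of_isPerfect (hg : isPerfect I.truth g) : Balanced (n / ℓ) g := by
  intro j
  rcases Finset.eq_empty_or_nonempty {v | g v = j} with h | ⟨w, hw⟩
  · simp [load, h]
  · rw [load, ← I.truth_size (I.truth w)]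
    refine card_le_card fun v hv => ?_
    simp only [mem_filter, mem_univ, true_and] at hv hw ⊢
    exact (hg v w).1 (hv.trans hw.symm)

theorem component_eq_truth_class_of_complete {s : ℕ} (hs : Complete (n / ℓ) (I.sigma.take s))
    (v : Fin n) :
    component (I.sigma.take s) v = ({w | I.truth w = I.truth v} : Finset (Fin n)) := by
  refine eq_of_subset_of_card_le (fun w hw => ?_) ((I.truth_size _).trans (hs v).symm).le
  simpa using (I.reveals w v).1 (sameComp_mono (List.take_subset _ _) (mem_component.1 hw))

theorem complete_sigma : Complete (n / ℓ) I.sigma := by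
  intro v
  rw [← I.truth_size (I.truth v)]
  congr 1
  ext w
  simp [I.reveals]

theorem isPerfect_of_collocates {f : Fin n → Fin ℓ} (hf : collocates I.sigma f)
    (hb : Balanced (n / ℓ) f) : isPerfect I.truth f := by
  refine fun u v => ⟨fun huv => ?_, fun h => hf u v ((I.reveals u v).2 h)⟩
  by_contra htuv
  have hsub : ({w | I.truth w = I.truth u} : Finset (Fin n)) ∪
      ({w | I.truth w = I.truth v} : Finset (Fin n)) ⊆ ({w | f w = f u} : Finset (Fin n)) := by
    intro w hw
    simp only [mem_union, mem_filter, mem_univ, true_and] at hw ⊢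
    rcases hw with hw | hw
    · exact hf w u ((I.reveals w u).2 hw)
    · exact (hf w v ((I.reveals w v).2 hw)).trans huv.symm
  have hcard := card_le_card hsub
  rw [card_union_of_disjoint (disjoint_filter.2 fun w _ hwu hwv => htuv (hwu.symm.trans hwv)),
    I.truth_size, I.truth_size] at hcard
  have hpos : 0 < n / ℓ := I.truth_size (I.truth u) ▸ card_pos.2 ⟨u, by simp⟩
  have := hb (f u)
  rw [load] at this
  omega

/-- Once the revealed components are the ground-truth ones, no later request merges two
components. -/
theorem card_completesAt_le_one :
    #{t ∈ range I.sigma.length | CompletesAt (n / ℓ) I.sigma t} ≤ 1 := by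
  have key {a b : ℕ} (ha : CompletesAt (n / ℓ) I.sigma a) (hb : CompletesAt (n / ℓ) I.sigma b) :
      ¬ a < b := by
    obtain ⟨ha, -, hca⟩ := ha
    obtain ⟨hb, hmb, -⟩ := hb
    intro hab
    rw [← List.take_succ_eq_append_getElem ha] at hca
    have : sameComp (I.sigma.take (a + 1)) I.sigma[b].1 I.sigma[b].2 := by
      rw [← mem_component, component_eq_truth_class_of_complete I hca]
      simpa using I.edges_within _ (List.getElem_mem hb)
    exact hmb (sameComp_mono (List.take_subset_take_left _ hab) this)
  refine card_le_one.2 fun a ha b hb => ?_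
  simp only [mem_filter] at ha hb
  exact le_antisymm (not_lt.1 (key hb.2 ha.2)) (not_lt.1 (key ha.2 hb.2))

variable {cap : ℝ}

theorem invariant_run (hcap : 0 ≤ cap) (hg : isPerfect I.truth g) {t : ℕ}
    (ht : t ≤ I.sigma.length) :
    Invariant cap I.init g (I.sigma.take t) (run cap I.init I.sigma t) := by
  induction t with
  | zero =>
    rw [run_zero]
    exact ⟨collocates_iff_forall_mem.2 (by simp), fun j => (I.init_size j).le, by simpa using hcap,
      by simp [movesBetween], fun _ => rfl⟩
  | succ t ih =>
    have ht' : t < I.sigma.length := ht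
    have hgE := collocates_take_of_isPerfect I hg (t + 1)
    rw [List.take_succ_eq_append_getElem ht'] at hgE ⊢
    rw [run_succ ht']
    exact (ih ht'.le).step (balanced_of_isPerfect I hg) hgE

theorem collocates_state (hcap : 0 ≤ cap) (t : ℕ) :
    collocates (I.sigma.take t) (state (algo cap) I.init I.sigma t) := by
  rw [state_algo, List.take_eq_take_min]
  exact (invariant_run I hcap (isPerfect_truth I) (min_le_right _ _)).collocated

theorem validCap_state {ε : ℝ} (hε : 0 ≤ ε) (t : ℕ) :
    validCap ε (state (algo (ε * n / ℓ)) I.init I.sigma t) := by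
  have h := invariant_run I (cap := ε * n / ℓ) (by positivity) (isPerfect_truth I)
    (min_le_right t I.sigma.length)
  rw [state_algo]
  exact validCap_of_load_le h.load_le h.moved_le

theorem isPerfect_state_length (hcap : 0 ≤ cap) :
    isPerfect I.truth (state (algo cap) I.init I.sigma I.sigma.length) := by
  have h := invariant_run I hcap (isPerfect_truth I) le_rfl
  rw [List.take_length] at h
  have h0 := h.moved_eq_zero (complete_sigma I)
  rw [state_algo, min_self]
  exact isPerfect_of_collocates I h.collocated fun j => by simpa [h0] using h.load_le j

theorem algComm_le (hcap : 0 ≤ cap) :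
    algComm (algo cap) I.init I.sigma ≤ ∑ t ∈ range I.sigma.length, #(smallSideAt I.sigma t) := by
  rw [algComm, ← Fin.sum_univ_eq_sum_range]
  refine sum_le_sum fun t _ => ?_
  split_ifs with hne
  · have h := invariant_run I hcap (isPerfect_truth I) t.2.le
    rw [state_algo, min_eq_left t.2.le] at hne
    rw [smallSideAt_of_lt _ t.2]
    exact card_smallSide_pos fun hs => hne (h.collocated _ _ (by simpa using hs))
  · exact Nat.zero_le _

theorem algMoves_le (hcap : 0 ≤ cap) (hg : isPerfect I.truth g) :
    algMoves (algo cap) I.init I.sigma ≤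
      2 * ∑ t ∈ range I.sigma.length, #(smallSideAt I.sigma t) +
        2 * movesBetween I.init g *
          (#{t ∈ range I.sigma.length | OverflowsAt cap I.init I.sigma t} + 1) := by
  set D := movesBetween I.init g
  have hstep : ∀ t < I.sigma.length,
      movesBetween (run cap I.init I.sigma t).assign (run cap I.init I.sigma (t + 1)).assign +
        (run cap I.init I.sigma (t + 1)).moved ≤
      (run cap I.init I.sigma t).moved + (2 * #(smallSideAt I.sigma t) +
        ((if OverflowsAt cap I.init I.sigma t then 2 * D else 0) +
          (if CompletesAt (n / ℓ) I.sigma t then 2 * D else 0))) := by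
    intro t ht
    have hgE := collocates_take_of_isPerfect I hg (t + 1)
    rw [List.take_succ_eq_append_getElem ht] at hgE
    have hD := (rebalance_spec (a0 := I.init) (balanced_of_isPerfect I hg) hgE).2.2
    simp only [run_succ ht, smallSideAt_of_lt _ ht, OverflowsAt, CompletesAt,
      exists_prop_of_true ht]
    exact (movesBetween_step_add_le (invariant_run I hcap hg ht.le).movesBetween_le hD).trans_eq
      (add_assoc _ _ _)
  have htel := sum_range_add_le_of_step (a := fun t => (run cap I.init I.sigma t).moved) hstep
  have hC := card_completesAt_le_one I
  have hM : algMoves (algo cap) I.init I.sigma = ∑ t ∈ range I.sigma.length,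
      movesBetween (run cap I.init I.sigma t).assign (run cap I.init I.sigma (t + 1)).assign := by
    refine sum_congr rfl fun t ht => ?_
    rw [state_algo, state_algo, min_eq_left (mem_range.1 ht).le, min_eq_left (mem_range.1 ht)]
  simp only [sum_add_distrib, sum_ite, sum_const_zero, add_zero, sum_const, smul_eq_mul,
    ← mul_sum, run_zero, zero_add] at htel
  rw [hM]
  nlinarith

end Instance

theorem movesBetween_le_schedMoves (a0 : Fin n → Fin ℓ) (σ : List (Fin n × Fin n))
    (g : ℕ → Fin n → Fin ℓ) : movesBetween a0 (g σ.length) ≤ schedMoves a0 σ g := by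
  suffices ∀ T, movesBetween a0 (g T) ≤
      movesBetween a0 (g 0) + ∑ t ∈ range T, movesBetween (g t) (g (t + 1)) from this _
  intro T
  induction T with
  | zero => simp
  | succ T ih =>
    rw [sum_range_succ]
    have := movesBetween_triangle a0 (g T) (g (T + 1))
    omega

section Optimum

variable (I : ReInstance n ℓ) {g : Fin n → Fin ℓ}

theorem exists_isPerfect_forall_le : ∃ g, isPerfect I.truth g ∧
    ∀ g', isPerfect I.truth g' → movesBetween I.init g ≤ movesBetween I.init g' :=
  ⟨_, Function.argminOn_mem (movesBetween I.init) {g | isPerfect I.truth g}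
      ⟨I.truth, isPerfect_truth I⟩,
    fun _ hg' => Function.argminOn_le (movesBetween I.init) {g | isPerfect I.truth g} hg'⟩

theorem mul_movesBetween_le_OPTcost {α ε : ℝ} (hα : 0 ≤ α) (hε : 0 ≤ ε)
    (hmin : ∀ g', isPerfect I.truth g' → movesBetween I.init g ≤ movesBetween I.init g') :
    α * movesBetween I.init g ≤ OPTcost α ε I := by
  have htruth : validCap ε I.truth :=
    validCap_of_load_le (m := 0) (balanced_of_isPerfect I (isPerfect_truth I))
      (by rw [Nat.cast_zero]; positivity)
  refine le_csInf ⟨_, fun _ => I.truth, fun _ => htruth, isPerfect_truth I, rfl⟩ ?_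
  rintro c ⟨g', -, hg', rfl⟩
  have : (movesBetween I.init g : ℝ) ≤ schedMoves I.init I.sigma g' := by
    exact_mod_cast (hmin _ hg').trans (movesBetween_le_schedMoves I.init I.sigma g')
  nlinarith [(Nat.cast_nonneg (schedComm I.sigma g') : (0 : ℝ) ≤ _)]

end Optimum

theorem natCast_le_mul_logb_two {n : ℕ} (hn : n = 0 ∨ 2 ≤ n) : (n : ℝ) ≤ n * Real.logb 2 n := by
  rcases hn with rfl | hn
  · simp
  · refine le_mul_of_one_le_right (Nat.cast_nonneg n) ?_
    rw [Real.le_logb_iff_rpow_le one_lt_two (by positivity), Real.rpow_one]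
    exact_mod_cast hn

theorem cost_le_of_bounds {α ε K N L V D O M C P : ℝ} (hα : 1 ≤ α) (hε : 0 < ε)
    (hKL : 0 ≤ K * L) (hM : M ≤ 2 * V + 2 * D * (O + 1)) (hC : C ≤ V) (hV : V ≤ N * L)
    (hD : D ≤ N * L) (hD0 : 0 ≤ D) (hDO : D * (O * ε) ≤ D * (K * L)) (hP : α * D ≤ P) :
    α * M + C ≤ 5 * (α * N * L + P * (K * L) / ε) := by
  have hDOP : α * D * O ≤ P * (K * L) / ε := by
    rw [le_div_iff₀ hε]
    nlinarith [mul_le_mul_of_nonneg_left hDO (by linarith : (0 : ℝ) ≤ α)]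
  have hNL : 0 ≤ N * L := hD0.trans hD
  have hM' : α * M ≤ 2 * (α * V) + 2 * (α * D * O) + 2 * (α * D) := by
    nlinarith [mul_le_mul_of_nonneg_left hM (by linarith : (0 : ℝ) ≤ α)]
  have hαV : α * V ≤ α * (N * L) := mul_le_mul_of_nonneg_left hV (by linarith)
  have hαD : α * D ≤ α * (N * L) := mul_le_mul_of_nonneg_left hD (by linarith)
  have hCα : C ≤ α * (N * L) := hC.trans (hV.trans (le_mul_of_one_le_left hNL hα))
  have hP0 : 0 ≤ P * (K * L) / ε :=
    div_nonneg (mul_nonneg ((mul_nonneg (by linarith) hD0).trans hP) hKL) hε.le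
  linarith

theorem algCost_le (I : ReInstance n ℓ) {α ε : ℝ} (hℓ : 2 ≤ ℓ) (hdvd : ℓ ∣ n) (hα : 1 < α)
    (hε : 0 < ε) :
    algCost α (algo (ε * n / ℓ)) I.init I.sigma ≤
      5 * (α * n * Real.logb 2 n + OPTcost α ε I * ((ℓ : ℝ) * Real.logb 2 n) / ε) := by
  obtain ⟨g, hg, hmin⟩ := exists_isPerfect_forall_le I
  have hcap : (0 : ℝ) ≤ ε * n / ℓ := by positivity
  have hn : n = 0 ∨ 2 ≤ n :=
    (Nat.eq_zero_or_pos n).imp_right fun h => hℓ.trans (Nat.le_of_dvd h hdvd)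
  have hD : (movesBetween I.init g : ℝ) ≤ n := by exact_mod_cast movesBetween_le_card _ _
  have hDO : (movesBetween I.init g : ℝ) *
      (#{t ∈ range I.sigma.length | OverflowsAt (ε * n / ℓ) I.init I.sigma t} * ε) ≤
      movesBetween I.init g * (ℓ * Real.logb 2 n) := by
    rcases hn with rfl | hn
    · simp [show movesBetween I.init g = 0 by simpa using hD]
    · exact mul_le_mul_of_nonneg_left (card_overflowsAt_mul_le_logb I.sigma I.init
        (by omega) (by omega)) (Nat.cast_nonneg _)
  rw [algCost]
  have hL : 0 ≤ Real.logb 2 n :=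
    div_nonneg (Real.log_natCast_nonneg n) (Real.log_nonneg one_le_two)
  exact cost_le_of_bounds hα.le hε (mul_nonneg (Nat.cast_nonneg ℓ) hL)
    (by exact_mod_cast algMoves_le I hcap hg) (by exact_mod_cast algComm_le I hcap)
    (cast_sum_card_smallSideAt_le I.sigma) (hD.trans (natCast_le_mul_logb_two hn))
    (Nat.cast_nonneg _) hDO (mul_movesBetween_le_OPTcost I (by linarith) hε.le hmin)

end ReEmbedding

/-- **Small–Large–Rebalance, ℓ servers.** There is a universal constant
`C` such that for all `n`, `ℓ ≥ 2` dividing `n`, `α > 1` and `ε > 0` there is a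
deterministic online algorithm for `ℓ` servers of capacity `(1+ε)·n/ℓ` which always
keeps every currently-revealed connected component on one server, never exceeds the
capacities, ends with each ground-truth component alone on one server, and whose total
cost on every instance is at most `C·(α·n·log₂ n + OPT·(ℓ·log₂ n)/ε)`. -/
theorem stmt8 :
    ∃ C : ℝ, 0 < C ∧
      ∀ (n ℓ : ℕ) (α ε : ℝ), 2 ≤ ℓ → ℓ ∣ n → 1 < α → 0 < ε →
        ∃ A : OnlineAlg n ℓ, ∀ I : ReInstance n ℓ,
          (∀ t, collocates (I.sigma.take t) (state A I.init I.sigma t)) ∧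
          (∀ t, validCap ε (state A I.init I.sigma t)) ∧
          isPerfect I.truth (state A I.init I.sigma I.sigma.length) ∧
          algCost α A I.init I.sigma ≤
            C * (α * n * Real.logb 2 n + OPTcost α ε I * ((ℓ : ℝ) * Real.logb 2 n) / ε) := by
  refine ⟨5, by norm_num, fun n ℓ α ε hℓ hdvd hα hε => ⟨ReEmbedding.algo (ε * n / ℓ), fun I => ?_⟩⟩
  have hcap : (0 : ℝ) ≤ ε * n / ℓ := by positivity
  exact ⟨ReEmbedding.collocates_state I hcap, ReEmbedding.validCap_state I hε.le,
    ReEmbedding.isPerfect_state_length I hcap, ReEmbedding.algCost_le I hℓ hdvd hα hε⟩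
end
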